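/- arXiv:1311.7416 — 7 statements merged into one kernel-verified Lean document; each statement's English description precedes it below -/
import Mathlib

section
/- Let V be an even-dimensional real vector space and let J, K be endomorphisms of V with J² = -1 and K² = -1. Then ker[J,K] = ker(J+K) ⊕ ker(J-K), where [J,K] = JK - KJ. -/
/-- For an even-dimensional real vector space `V` and endomorphisms
`J, K` with `J² = -1` and `K² = -1`, the kernel of the commutator `[J,K] = JK - KJ`
is the (internal) direct sum of `ker (J+K)` and `ker (J-K)`. -/
theorem ker_commutator_eq_ker_add_sup_ker_sub
    (V : Type*) [AddCommGroup V] [Module ℝ V] [FiniteDimensional ℝ V]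
    (n : ℕ) (hdim : Module.finrank ℝ V = 2 * n)
    (J K : Module.End ℝ V) (hJ : J * J = -1) (hK : K * K = -1) :
    LinearMap.ker (J * K - K * J) = LinearMap.ker (J + K) ⊔ LinearMap.ker (J - K) ∧
      Disjoint (LinearMap.ker (J + K)) (LinearMap.ker (J - K)) := by
  have hJ' : ∀ y, J (J y) = -y := fun y => by
    simpa [Module.End.mul_apply] using LinearMap.ext_iff.mp hJ y
  have hK' : ∀ y, K (K y) = -y := fun y => by
    simpa [Module.End.mul_apply] using LinearMap.ext_iff.mp hK y
  constructor
  · apply le_antisymm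
    · intro x hx
      rw [LinearMap.mem_ker] at hx
      simp only [LinearMap.sub_apply, Module.End.mul_apply, sub_eq_zero] at hx
      -- hx : J (K x) = K (J x)
      have hKJK : K (J (K x)) = -(J x) := by rw [hx, hK']
      refine Submodule.mem_sup.mpr ⟨(1/2 : ℝ) • (x + J (K x)), ?_,
        (1/2 : ℝ) • (x - J (K x)), ?_, ?_⟩
      · rw [LinearMap.mem_ker, map_smul]
        have : (J + K) (x + J (K x)) = 0 := by
          simp only [LinearMap.add_apply, map_add, hJ', hKJK]
          abel
        rw [this, smul_zero]
      · rw [LinearMap.mem_ker, map_smul]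
        have : (J - K) (x - J (K x)) = 0 := by
          simp only [LinearMap.sub_apply, map_sub, hJ', hKJK]
          abel
        rw [this, smul_zero]
      · rw [← smul_add]
        have : x + J (K x) + (x - J (K x)) = (2:ℝ) • x := by
          rw [two_smul]; abel
        rw [this, smul_smul]
        norm_num
    · rw [sup_le_iff]
      constructor <;> intro x hx <;> rw [LinearMap.mem_ker] at hx ⊢ <;>
        simp only [LinearMap.add_apply, LinearMap.sub_apply] at hx <;>
        simp only [LinearMap.sub_apply, Module.End.mul_apply]
      · -- J x + K x = 0, i.e. K x = - J x
        have hKx : K x = -(J x) := eq_neg_of_add_eq_zero_right hx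
        have hJx : J x = -(K x) := eq_neg_of_add_eq_zero_left hx
        have h1 : J (K x) = x := by rw [hKx, map_neg, hJ', neg_neg]
        have h2 : K (J x) = x := by rw [hJx, map_neg, hK', neg_neg]
        rw [h1, h2, sub_self]
      · have hKx : K x = J x := (sub_eq_zero.mp hx).symm
        have h1 : J (K x) = -x := by rw [hKx, hJ']
        have h2 : K (J x) = -x := by rw [← hKx, hK']
        rw [h1, h2, sub_self]
  · rw [Submodule.disjoint_def]
    intro x hx hy
    rw [LinearMap.mem_ker] at hx hy
    simp only [LinearMap.add_apply] at hx
    simp only [LinearMap.sub_apply, sub_eq_zero] at hy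
    have h2 : (2:ℝ) • J x = 0 := by
      rw [two_smul]
      calc J x + J x = J x + K x := by rw [hy]
        _ = 0 := hx
    have hJx : J x = 0 := by
      have := smul_eq_zero.mp h2
      rcases this with h | h
      · norm_num at h
      · exact h
    have := hJ' x
    rw [hJx, map_zero] at this
    exact neg_eq_zero.mp this.symm
end

section
/- Let (V,g) be a finite-dimensional real inner product space and let J, K be orthogonal complex structures on V (J² = K² = -1, g(J·,J·) = g(·,·), g(K·,K·) = g(·,·)). Then V decomposes as the orthogonal direct sum Im[J,K] ⊕ ker(J+K) ⊕ ker(J-K), and each summand is invariant under both J and K. -/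
/-- For orthogonal complex structures `J, K` on a finite-dimensional real
inner product space `(V,g)`, `V` is the orthogonal direct sum
`Im [J,K] ⊕ ker (J+K) ⊕ ker (J-K)`, and each summand is `J`- and `K`-invariant. -/
theorem orthogonal_decomposition_im_ker_ker
    (V : Type*) [NormedAddCommGroup V] [InnerProductSpace ℝ V] [FiniteDimensional ℝ V]
    (J K : Module.End ℝ V) (hJ : J * J = -1) (hK : K * K = -1)
    (hJg : ∀ v w : V, @inner ℝ V _ (J v) (J w) = @inner ℝ V _ v w)
    (hKg : ∀ v w : V, @inner ℝ V _ (K v) (K w) = @inner ℝ V _ v w) :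
    (LinearMap.range (J * K - K * J) ⊔ LinearMap.ker (J + K) ⊔ LinearMap.ker (J - K) = ⊤) ∧
    (∀ x ∈ LinearMap.range (J * K - K * J), ∀ y ∈ LinearMap.ker (J + K),
        @inner ℝ V _ x y = 0) ∧
    (∀ x ∈ LinearMap.range (J * K - K * J), ∀ y ∈ LinearMap.ker (J - K),
        @inner ℝ V _ x y = 0) ∧
    (∀ x ∈ LinearMap.ker (J + K), ∀ y ∈ LinearMap.ker (J - K),
        @inner ℝ V _ x y = 0) ∧
    (Submodule.map J (LinearMap.range (J * K - K * J)) ≤ LinearMap.range (J * K - K * J)) ∧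
    (Submodule.map K (LinearMap.range (J * K - K * J)) ≤ LinearMap.range (J * K - K * J)) ∧
    (Submodule.map J (LinearMap.ker (J + K)) ≤ LinearMap.ker (J + K)) ∧
    (Submodule.map K (LinearMap.ker (J + K)) ≤ LinearMap.ker (J + K)) ∧
    (Submodule.map J (LinearMap.ker (J - K)) ≤ LinearMap.ker (J - K)) ∧
    (Submodule.map K (LinearMap.ker (J - K)) ≤ LinearMap.ker (J - K)) := by
  -- pointwise versions of J² = -1, K² = -1
  have hJ2 : ∀ v : V, J (J v) = -v := by
    intro v
    have := congrArg (fun T : Module.End ℝ V => T v) hJ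
    simpa using this
  have hK2 : ∀ v : V, K (K v) = -v := by
    intro v
    have := congrArg (fun T : Module.End ℝ V => T v) hK
    simpa using this
  -- J and K are skew-adjoint
  have hJs : ∀ v w : V, @inner ℝ V _ (J v) w = -@inner ℝ V _ v (J w) := by
    intro v w
    have h1 : @inner ℝ V _ (J v) (J (J w)) = @inner ℝ V _ v (J w) := hJg v (J w)
    rw [hJ2 w] at h1
    simp only [inner_neg_right] at h1
    linarith
  have hKs : ∀ v w : V, @inner ℝ V _ (K v) w = -@inner ℝ V _ v (K w) := by
    intro v w
    have h1 : @inner ℝ V _ (K v) (K (K w)) = @inner ℝ V _ v (K w) := hKg v (K w)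
    rw [hK2 w] at h1
    simp only [inner_neg_right] at h1
    linarith
  set L : Module.End ℝ V := J * K - K * J with hLdef
  have hLapp : ∀ v : V, L v = J (K v) - K (J v) := by
    intro v; simp [hLdef, LinearMap.sub_apply, Module.End.mul_apply]
  -- L is skew-adjoint
  have hLs : ∀ v w : V, @inner ℝ V _ (L v) w = -@inner ℝ V _ v (L w) := by
    intro v w
    rw [hLapp v, hLapp w]
    rw [inner_sub_left, inner_sub_right]
    rw [hJs (K v) w, hKs (J v) w, hJs v (K w), hKs v (J w)]
    ring_nf
  -- orthogonality: range L ⊥ ker (J+K)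
  have orth1 : ∀ x ∈ LinearMap.range L, ∀ y ∈ LinearMap.ker (J + K),
      @inner ℝ V _ x y = 0 := by
    rintro x ⟨u, rfl⟩ y hy
    have hy' : J y + K y = 0 := by
      have := hy; simp only [LinearMap.mem_ker, LinearMap.add_apply] at this; exact this
    -- L u = -(J+K)((J-K) u)
    have key : L u = -((J + K) ((J - K) u)) := by
      simp only [LinearMap.add_apply, LinearMap.sub_apply, map_sub, hLapp]
      rw [hJ2 u, hK2 u]
      abel
    rw [key]
    have : @inner ℝ V _ ((J + K) ((J - K) u)) y
        = -@inner ℝ V _ ((J - K) u) ((J + K) y) := by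
      simp only [LinearMap.add_apply, inner_add_left, inner_add_right]
      rw [hJs ((J - K) u) y, hKs ((J - K) u) y]
      ring
    have hy0 : (J + K) y = 0 := by simp [LinearMap.add_apply, hy']
    rw [inner_neg_left, this, hy0, inner_zero_right]
    ring
  -- orthogonality: range L ⊥ ker (J-K)
  have orth2 : ∀ x ∈ LinearMap.range L, ∀ y ∈ LinearMap.ker (J - K),
      @inner ℝ V _ x y = 0 := by
    rintro x ⟨u, rfl⟩ y hy
    have hy0 : (J - K) y = 0 := hy
    -- L u = (J-K)((J+K) u)
    have key : L u = (J - K) ((J + K) u) := by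
      simp only [LinearMap.add_apply, LinearMap.sub_apply, map_add, hLapp]
      rw [hJ2 u, hK2 u]
      abel
    rw [key]
    have : @inner ℝ V _ ((J - K) ((J + K) u)) y
        = -@inner ℝ V _ ((J + K) u) ((J - K) y) := by
      simp only [LinearMap.sub_apply, inner_sub_left, inner_sub_right]
      rw [hJs ((J + K) u) y, hKs ((J + K) u) y]
      ring
    rw [this, hy0, inner_zero_right]
    ring
  -- orthogonality: ker (J+K) ⊥ ker (J-K)
  have orth3 : ∀ x ∈ LinearMap.ker (J + K), ∀ y ∈ LinearMap.ker (J - K),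
      @inner ℝ V _ x y = 0 := by
    intro x hx y hy
    have hx' : J x = -K x := by
      have : J x + K x = 0 := hx
      linear_combination (norm := module) this
    have hy' : J y = K y := by
      have : J y - K y = 0 := hy
      linear_combination (norm := module) this
    have h1 : @inner ℝ V _ (J x) (J y) = @inner ℝ V _ x y := hJg x y
    rw [hx', hy'] at h1
    rw [inner_neg_left, hKg x y] at h1
    linarith
  -- invariance lemmas
  have invJL : Submodule.map J (LinearMap.range L) ≤ LinearMap.range L := by
    rintro _ ⟨_, ⟨u, rfl⟩, rfl⟩
    refine ⟨-(J u), ?_⟩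
    simp only [hLapp, map_neg, map_sub]
    rw [hJ2 (K u)]
    have : K (J (J u)) = -K u := by rw [hJ2 u, map_neg]
    rw [this]
    abel
  have invKL : Submodule.map K (LinearMap.range L) ≤ LinearMap.range L := by
    rintro _ ⟨_, ⟨u, rfl⟩, rfl⟩
    refine ⟨-(K u), ?_⟩
    simp only [hLapp, map_neg, map_sub]
    rw [hK2 (J u)]
    have : J (K (K u)) = -J u := by rw [hK2 u, map_neg]
    rw [this]
    abel
  have invJA : Submodule.map J (LinearMap.ker (J + K)) ≤ LinearMap.ker (J + K) := by
    rintro _ ⟨x, hx, rfl⟩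
    have hx' : J x = -K x := by
      have : J x + K x = 0 := hx
      linear_combination (norm := module) this
    simp only [LinearMap.mem_ker, LinearMap.add_apply]
    have hKJ : K (J x) = x := by rw [hx', map_neg, hK2 x]; abel
    rw [hJ2 x, hKJ]; abel
  have invKA : Submodule.map K (LinearMap.ker (J + K)) ≤ LinearMap.ker (J + K) := by
    rintro _ ⟨x, hx, rfl⟩
    have hx' : J x = -K x := by
      have : J x + K x = 0 := hx
      linear_combination (norm := module) this
    have hJK : J (K x) = x := by
      have h : K x = -J x := by linear_combination (norm := module) hx'
      rw [h, map_neg, hJ2 x]; abel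
    simp only [LinearMap.mem_ker, LinearMap.add_apply]
    rw [hJK, hK2 x]; abel
  have invJB : Submodule.map J (LinearMap.ker (J - K)) ≤ LinearMap.ker (J - K) := by
    rintro _ ⟨x, hx, rfl⟩
    have hx' : J x = K x := by
      have : J x - K x = 0 := hx
      linear_combination (norm := module) this
    simp only [LinearMap.mem_ker, LinearMap.sub_apply]
    have hKJ : K (J x) = -x := by rw [hx', hK2 x]
    rw [hJ2 x, hKJ]; abel
  have invKB : Submodule.map K (LinearMap.ker (J - K)) ≤ LinearMap.ker (J - K) := by
    rintro _ ⟨x, hx, rfl⟩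
    have hx' : J x = K x := by
      have : J x - K x = 0 := hx
      linear_combination (norm := module) this
    simp only [LinearMap.mem_ker, LinearMap.sub_apply]
    have hJK : J (K x) = -x := by rw [← hx', hJ2 x]
    rw [hJK, hK2 x]; abel
  -- the sup is ⊤
  have htop : LinearMap.range L ⊔ LinearMap.ker (J + K) ⊔ LinearMap.ker (J - K) = ⊤ := by
    rw [← Submodule.orthogonal_eq_bot_iff]
    rw [Submodule.eq_bot_iff]
    intro x hx
    simp only [Submodule.mem_orthogonal] at hx
    have hxL : ∀ u : V, @inner ℝ V _ (L u) x = 0 := fun u =>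
      hx (L u) (Submodule.mem_sup_left (Submodule.mem_sup_left ⟨u, rfl⟩))
    have hxA : ∀ y ∈ LinearMap.ker (J + K), @inner ℝ V _ y x = 0 := fun y hy =>
      hx y (Submodule.mem_sup_left (Submodule.mem_sup_right hy))
    have hxB : ∀ y ∈ LinearMap.ker (J - K), @inner ℝ V _ y x = 0 := fun y hy =>
      hx y (Submodule.mem_sup_right hy)
    -- x ⊥ range L ⟹ L x = 0
    have hLx : L x = 0 := by
      have h : ∀ u : V, @inner ℝ V _ u (L x) = 0 := by
        intro u
        have h1 := hxL u
        rw [hLs u x] at h1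
        linarith
      exact inner_self_eq_zero.mp (h (L x))
    -- L x = 0 means J (K x) = K (J x)
    have hcomm : J (K x) = K (J x) := by
      have : J (K x) - K (J x) = 0 := by rw [← hLapp x]; exact hLx
      linear_combination (norm := module) this
    -- A² x ∈ ker B, B² x ∈ ker A, and -4 x = A² x + B² x
    set a : V := (J + K) ((J + K) x) with ha
    set b : V := (J - K) ((J - K) x) with hb
    have ha' : a = -(2 : ℝ) • x + (2 : ℝ) • J (K x) := by
      simp only [ha, LinearMap.add_apply, map_add]
      rw [hJ2 x, hK2 x, hcomm]
      module
    have hb' : b = -(2 : ℝ) • x - (2 : ℝ) • J (K x) := by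
      simp only [hb, LinearMap.sub_apply, map_sub]
      rw [hJ2 x, hK2 x, hcomm]
      module
    have hKJK : K (J (K x)) = -J x := by
      rw [hcomm, hK2 (J x)]
    have hJJK : J (J (K x)) = -K x := hJ2 (K x)
    have haB : a ∈ LinearMap.ker (J - K) := by
      simp only [LinearMap.mem_ker, LinearMap.sub_apply]
      rw [ha']
      simp only [map_add, map_smul, map_neg]
      rw [hJJK, hKJK]
      module
    have hbA : b ∈ LinearMap.ker (J + K) := by
      simp only [LinearMap.mem_ker, LinearMap.add_apply]
      rw [hb']
      simp only [map_sub, map_smul, map_neg]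
      rw [hJJK, hKJK]
      module
    have hsum : a + b = -(4 : ℝ) • x := by
      rw [ha', hb']; module
    have hxa : @inner ℝ V _ a x = 0 := hxB a haB
    have hxb : @inner ℝ V _ b x = 0 := hxA b hbA
    have : @inner ℝ V _ (-(4 : ℝ) • x) x = 0 := by
      rw [← hsum, inner_add_left, hxa, hxb]; ring
    rw [inner_smul_left] at this
    simp only [RCLike.conj_to_real] at this
    have hx0 : @inner ℝ V _ x x = 0 := by
      have h4 : (-(4 : ℝ)) ≠ 0 := by norm_num
      field_simp at this
      linarith
    exact inner_self_eq_zero.mp hx0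
  exact ⟨htop, orth1, orth2, orth3, invJL, invKL, invJA, invKA, invJB, invKB⟩
end

section
/- Let (V,g) be a finite-dimensional real inner product space and let J, K be orthogonal complex structures on V. Then the rank of the commutator [J,K] is divisible by 4. -/
open Module LinearMap
open scoped InnerProductSpace Quaternion

/-!
`C = JK - KJ` is skew-adjoint, because `J` and `K` are, and anticommutes with `J`, because
`J² = -1`. A skew-adjoint map is injective on its range, so `-C²` is positive definite there.
On an eigenspace of `-C²` with eigenvalue `μ > 0`, the maps `J` and `μ^(-1/2) C` are
anticommuting complex structures; they make the eigenspace a module over the quaternions,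
so its real dimension is a multiple of 4.
-/

theorem four_dvd_finrank_of_anticommute {M : Type*} [AddCommGroup M] [Module ℝ M]
    {J T : End ℝ M} (hJ : J * J = -1) (hT : T * T = -1) (hJT : J * T = -(T * J)) :
    4 ∣ finrank ℝ M := by
  let B : QuaternionAlgebra.Basis (End ℝ M) (-1 : ℝ) 0 (-1) :=
    { i := J, j := T, k := J * T
      i_mul_i := by simp [hJ]
      j_mul_j := by simp [hT]
      i_mul_j := rfl
      j_mul_i := by simp [hJT] }
  let _ : Module ℍ[ℝ] M := Module.compHom M B.liftHom.toRingHom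
  have : IsScalarTower ℝ ℍ[ℝ] M := ⟨fun r q v => congr($(map_smul B.liftHom r q) v)⟩
  exact Quaternion.finrank_eq_four (R := ℝ) ▸ Dvd.intro _ (finrank_mul_finrank ℝ ℍ[ℝ] M)

theorem four_dvd_finrank_of_anticommute_of_mul_self_eq_neg_smul {M : Type*} [AddCommGroup M]
    [Module ℝ M] {J C : End ℝ M} {μ : ℝ} (hμ : 0 < μ) (hJ : J * J = -1)
    (hC : C * C = -(μ • 1)) (hJC : J * C = -(C * J)) : 4 ∣ finrank ℝ M := by
  refine four_dvd_finrank_of_anticommute (T := (√μ)⁻¹ • C) hJ ?_ ?_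
  · rw [smul_mul_smul_comm, hC, smul_neg, smul_smul, ← mul_inv, Real.mul_self_sqrt hμ.le,
      inv_mul_cancel₀ hμ.ne', one_smul]
  · rw [mul_smul_comm, hJC, smul_mul_assoc, smul_neg]

theorem DirectSum.IsInternal.finrank_eq_sum {ι K V : Type*} [Fintype ι] [DecidableEq ι]
    [DivisionRing K] [AddCommGroup V] [Module K V] [FiniteDimensional K V]
    {A : ι → Submodule K V} (h : DirectSum.IsInternal A) :
    finrank K V = ∑ i, finrank K (A i) := by
  rw [← (LinearEquiv.ofBijective (DirectSum.coeLinearMap A) h).finrank_eq,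
    Module.finrank_directSum]

theorem commute_mul_self_of_mul_eq_neg_mul {R : Type*} [Ring R] {a b : R}
    (h : a * b = -(b * a)) : Commute (b * b) a := by
  have h' : b * a = -(a * b) := by rw [h, neg_neg]
  rw [Commute, SemiconjBy, mul_assoc, h', mul_neg, ← mul_assoc, h', neg_mul, neg_neg, mul_assoc]

theorem mul_commutator_eq_neg_commutator_mul {R : Type*} [Ring R] {a b : R} (ha : a * a = -1) :
    a * (a * b - b * a) = -((a * b - b * a) * a) := by
  rw [mul_sub, sub_mul, ← mul_assoc, ha, mul_assoc b, ha]
  noncomm_ring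

section Skew

variable {V : Type*} [NormedAddCommGroup V] [InnerProductSpace ℝ V] {C : End ℝ V}

theorem inner_apply_eq_neg_of_isometry_of_mul_self_eq_neg_one {J : End ℝ V} (hJ : J * J = -1)
    (hJg : ∀ v w, ⟪J v, J w⟫_ℝ = ⟪v, w⟫_ℝ) (v w : V) : ⟪J v, w⟫_ℝ = -⟪v, J w⟫_ℝ := by
  rw [← hJg, ← Module.End.mul_apply, hJ]
  simp

theorem inner_commutator_apply_eq_neg {J K : End ℝ V} (hJ : ∀ x y, ⟪J x, y⟫_ℝ = -⟪x, J y⟫_ℝ)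
    (hK : ∀ x y, ⟪K x, y⟫_ℝ = -⟪x, K y⟫_ℝ) (x y : V) :
    ⟪(J * K - K * J) x, y⟫_ℝ = -⟪x, (J * K - K * J) y⟫_ℝ := by
  simp only [LinearMap.sub_apply, Module.End.mul_apply, inner_sub_left, inner_sub_right, hJ, hK]
  ring

theorem isSymmetric_neg_mul_self (hC : ∀ x y, ⟪C x, y⟫_ℝ = -⟪x, C y⟫_ℝ) :
    (-(C * C)).IsSymmetric := fun x y => by
  simp only [LinearMap.neg_apply, Module.End.mul_apply, inner_neg_left, inner_neg_right, hC,
    neg_neg]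

theorem inner_neg_mul_self_apply_self (hC : ∀ x y, ⟪C x, y⟫_ℝ = -⟪x, C y⟫_ℝ) (x : V) :
    ⟪(-(C * C)) x, x⟫_ℝ = ‖C x‖ ^ 2 := by
  rw [LinearMap.neg_apply, Module.End.mul_apply, inner_neg_left, hC, neg_neg,
    real_inner_self_eq_norm_sq]

theorem pos_of_hasEigenvalue_neg_mul_self (hC : ∀ x y, ⟪C x, y⟫_ℝ = -⟪x, C y⟫_ℝ)
    (hinj : Function.Injective C) {μ : ℝ} (hμ : End.HasEigenvalue (-(C * C)) μ) : 0 < μ := by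
  obtain ⟨v, hv⟩ := hμ.exists_hasEigenvector
  have hCv : 0 < ‖C v‖ ^ 2 := by
    have : C v ≠ 0 := fun h => hv.2 (hinj (h.trans (map_zero C).symm))
    positivity
  have : μ * ‖v‖ ^ 2 = ‖C v‖ ^ 2 := by
    rw [← inner_neg_mul_self_apply_self hC, hv.apply_eq_smul, real_inner_smul_left,
      real_inner_self_eq_norm_sq]
  exact pos_of_mul_pos_left (this ▸ hCv) (by positivity)

theorem four_dvd_finrank_eigenspace_neg_mul_self (hC : ∀ x y, ⟪C x, y⟫_ℝ = -⟪x, C y⟫_ℝ)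
    (hinj : Function.Injective C) {J : End ℝ V} (hJ : J * J = -1) (hJC : J * C = -(C * J))
    {μ : ℝ} (hμ : End.HasEigenvalue (-(C * C)) μ) :
    4 ∣ finrank ℝ (End.eigenspace (-(C * C)) μ) := by
  have hJE := End.mapsTo_genEigenspace_of_comm
    (commute_mul_self_of_mul_eq_neg_mul hJC).neg_left μ 1
  have hCE := End.mapsTo_genEigenspace_of_comm
    ((Commute.refl C).mul_left (Commute.refl C)).neg_left μ 1
  refine four_dvd_finrank_of_anticommute_of_mul_self_eq_neg_smul
    (J := J.restrict hJE) (C := C.restrict hCE) (pos_of_hasEigenvalue_neg_mul_self hC hinj hμ)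
    ?_ ?_ ?_
  · ext x
    exact congr($hJ x)
  · ext x
    exact neg_eq_iff_eq_neg.mp (End.mem_eigenspace_iff.mp x.2)
  · ext x
    exact congr($hJC x)

variable [FiniteDimensional ℝ V]

theorem four_dvd_finrank_of_injective (hC : ∀ x y, ⟪C x, y⟫_ℝ = -⟪x, C y⟫_ℝ)
    (hinj : Function.Injective C) {J : End ℝ V} (hJ : J * J = -1) (hJC : J * C = -(C * J)) :
    4 ∣ finrank ℝ V := by
  classical
  rw [(isSymmetric_neg_mul_self hC).direct_sum_isInternal.finrank_eq_sum]
  exact Finset.dvd_sum fun μ _ => four_dvd_finrank_eigenspace_neg_mul_self hC hinj hJ hJC μ.2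

theorem four_dvd_finrank_range (hC : ∀ x y, ⟪C x, y⟫_ℝ = -⟪x, C y⟫_ℝ) {J : End ℝ V}
    (hJ : J * J = -1) (hJC : J * C = -(C * J)) : 4 ∣ finrank ℝ (range C) := by
  have hCW : Set.MapsTo C (range C) (range C) := fun x _ => mem_range_self C x
  have hJW : Set.MapsTo J (range C) (range C) := by
    rintro _ ⟨x, rfl⟩
    exact ⟨-J x, by simpa using congr($hJC x).symm⟩
  have hinj : Function.Injective (C.restrict hCW) := by
    refine (injective_iff_map_eq_zero _).mpr ?_
    rintro ⟨_, x, rfl⟩ h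
    have hCCx : C (C x) = 0 := congr(($h : V))
    have : ‖C x‖ ^ 2 = 0 := by
      rw [← inner_neg_mul_self_apply_self hC, LinearMap.neg_apply, Module.End.mul_apply, hCCx,
        neg_zero, inner_zero_left]
    exact Subtype.ext (norm_eq_zero.mp (pow_eq_zero_iff two_ne_zero |>.mp this))
  refine four_dvd_finrank_of_injective (C := C.restrict hCW) (J := J.restrict hJW)
    (fun x y => hC x y) hinj ?_ ?_
  · ext x
    exact congr($hJ x)
  · ext x
    exact congr($hJC x)

end Skew

/-- For orthogonal complex structures `J, K` on a finite-dimensional real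
inner product space, the rank of the commutator `[J,K] = JK - KJ` is divisible by 4. -/
theorem four_dvd_rank_commutator
    (V : Type*) [NormedAddCommGroup V] [InnerProductSpace ℝ V] [FiniteDimensional ℝ V]
    (J K : Module.End ℝ V) (hJ : J * J = -1) (hK : K * K = -1)
    (hJg : ∀ v w : V, @inner ℝ V _ (J v) (J w) = @inner ℝ V _ v w)
    (hKg : ∀ v w : V, @inner ℝ V _ (K v) (K w) = @inner ℝ V _ v w) :
    4 ∣ Module.finrank ℝ (LinearMap.range (J * K - K * J)) :=
  four_dvd_finrank_range
    (inner_commutator_apply_eq_neg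
      (inner_apply_eq_neg_of_isometry_of_mul_self_eq_neg_one hJ hJg)
      (inner_apply_eq_neg_of_isometry_of_mul_self_eq_neg_one hK hKg))
    hJ (mul_commutator_eq_neg_commutator_mul hJ)
end

section
/- Let V be a 2n-dimensional real vector space and let m₁, m₋₁ be nonnegative integers. There exists a linear map K on V with K² = -1 satisfying dim ker(J+K) = 2m₁ and dim ker(J-K) = 2m₋₁ (for a given complex structure J on V) if and only if m₁ + m₋₁ ≤ n. -/
open Complex LinearMap Module

section Aux

/-- the coordinatewise real-linear map `f ↦ fun j => c * f j + d * conj (f j)` -/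
noncomputable def Taux (k : ℕ) (c d : ℂ) : Module.End ℝ (Fin k → ℂ) where
  toFun f := fun j => c * f j + d * (starRingEnd ℂ) (f j)
  map_add' f g := by funext j; simp [mul_add]; ring
  map_smul' r f := by
    funext j
    simp [Complex.real_smul, map_mul]
    ring

@[simp] lemma Taux_apply (k : ℕ) (c d : ℂ) (f : Fin k → ℂ) (j : Fin k) :
    Taux k c d f j = c * f j + d * (starRingEnd ℂ) (f j) := rfl

lemma Taux_add (k : ℕ) (c d c' d' : ℂ) :
    Taux k c d + Taux k c' d' = Taux k (c + c') (d + d') := by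
  apply LinearMap.ext; intro f; funext j; simp; ring

lemma Taux_sub (k : ℕ) (c d c' d' : ℂ) :
    Taux k c d - Taux k c' d' = Taux k (c - c') (d - d') := by
  apply LinearMap.ext; intro f; funext j; simp; ring

lemma Taux_mul (k : ℕ) (c d c' d' : ℂ) :
    Taux k c d * Taux k c' d' =
      Taux k (c * c' + d * (starRingEnd ℂ) d') (c * d' + d * (starRingEnd ℂ) c') := by
  apply LinearMap.ext; intro f; funext j
  simp [Module.End.mul_apply, map_add, map_mul]
  ring

lemma Taux_zero (k : ℕ) : Taux k 0 0 = 0 := by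
  apply LinearMap.ext; intro f; funext j; simp

lemma Taux_neg_one (k : ℕ) : Taux k (-1) 0 = -1 := by
  apply LinearMap.ext; intro f; funext j; simp

lemma coord_zero (c d z : ℂ) (hcd : Complex.normSq c ≠ Complex.normSq d)
    (h0 : c * z + d * (starRingEnd ℂ) z = 0) : z = 0 := by
  have hcd' : c * (starRingEnd ℂ) c ≠ d * (starRingEnd ℂ) d := by
    rw [Complex.mul_conj, Complex.mul_conj]
    exact fun hc => hcd (by exact_mod_cast hc)
  have h1 : (starRingEnd ℂ) c * (starRingEnd ℂ) z + (starRingEnd ℂ) d * z = 0 := by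
    have := congrArg (starRingEnd ℂ) h0
    simpa [map_add, map_mul] using this
  have h4 : (d * (starRingEnd ℂ) d - c * (starRingEnd ℂ) c) * z = 0 := by
    linear_combination d * h1 - (starRingEnd ℂ) c * h0
  rcases mul_eq_zero.mp h4 with h' | h'
  · exact absurd (by linear_combination -h') hcd'
  · exact h'

lemma ker_Taux_eq_bot (k : ℕ) (c d : ℂ)
    (hcd : Complex.normSq c ≠ Complex.normSq d) :
    LinearMap.ker (Taux k c d) = ⊥ := by
  rw [LinearMap.ker_eq_bot']
  intro f hf
  funext j
  have : c * f j + d * (starRingEnd ℂ) (f j) = 0 := congrFun hf j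
  exact coord_zero c d (f j) hcd this

lemma prodMap_sub_aux {R M N M' N' : Type*} [CommRing R] [AddCommGroup M] [AddCommGroup N]
    [AddCommGroup M'] [AddCommGroup N'] [Module R M] [Module R N] [Module R M'] [Module R N']
    (f₁ f₂ : M →ₗ[R] M') (g₁ g₂ : N →ₗ[R] N') :
    (f₁.prodMap g₁) - (f₂.prodMap g₂) = (f₁ - f₂).prodMap (g₁ - g₂) := by
  apply LinearMap.ext
  rintro ⟨x, y⟩
  simp [LinearMap.prodMap_apply, Prod.ext_iff]

/-- product of submodules is linearly equivalent to the product of them. -/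
noncomputable def prodEquivAux {R M N : Type*} [Semiring R] [AddCommMonoid M] [AddCommMonoid N]
    [Module R M] [Module R N] (p : Submodule R M) (q : Submodule R N) :
    (p.prod q) ≃ₗ[R] p × q where
  toFun x := (⟨x.1.1, x.2.1⟩, ⟨x.1.2, x.2.2⟩)
  invFun x := ⟨(x.1.1, x.2.1), ⟨x.1.2, x.2.2⟩⟩
  left_inv _ := rfl
  right_inv _ := rfl
  map_add' _ _ := rfl
  map_smul' _ _ := rfl

lemma finrank_prod_aux {R M N : Type*} [DivisionRing R] [AddCommGroup M] [AddCommGroup N]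
    [Module R M] [Module R N] [FiniteDimensional R M] [FiniteDimensional R N]
    (p : Submodule R M) (q : Submodule R N) :
    finrank R (p.prod q) = finrank R p + finrank R q := by
  rw [LinearEquiv.finrank_eq (prodEquivAux p q), Module.finrank_prod]

lemma finrank_fin_fun_complex (k : ℕ) : finrank ℝ (Fin k → ℂ) = 2 * k := by
  rw [Module.finrank_pi_fintype]
  simp [Complex.finrank_real_complex, mul_comm]

end Aux

/-- On a `2n`-dimensional real vector space with a fixed complex structure `J`,
there exists a complex structure `K` with `dim ker (J+K) = 2m₁` and `dim ker (J-K) = 2mneg`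
if and only if `m₁ + mneg ≤ n`. -/
theorem exists_complex_structure_with_kernel_dims_iff
    (V : Type*) [AddCommGroup V] [Module ℝ V] [FiniteDimensional ℝ V]
    (n m₁ mneg : ℕ) (hdim : Module.finrank ℝ V = 2 * n)
    (J : Module.End ℝ V) (hJ : J * J = -1) :
    (∃ K : Module.End ℝ V, K * K = -1 ∧
        Module.finrank ℝ (LinearMap.ker (J + K)) = 2 * m₁ ∧
        Module.finrank ℝ (LinearMap.ker (J - K)) = 2 * mneg) ↔
      m₁ + mneg ≤ n := by
  constructor
  · rintro ⟨K, hK, h1, h2⟩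
    have hinf : LinearMap.ker (J + K) ⊓ LinearMap.ker (J - K) = ⊥ := by
      rw [eq_bot_iff]
      rintro x hx
      rcases Submodule.mem_inf.mp hx with ⟨hx1, hx2⟩
      have e1 : J x + K x = 0 := hx1
      have e2 : J x - K x = 0 := hx2
      have hJx : J x = 0 := by
        have h3 : J x + J x = 0 := by
          have := congrArg₂ (· + ·) e1 e2
          simpa [add_add_sub_cancel] using this
        have h2' : (2 : ℝ) • J x = 0 := by rw [two_smul]; exact h3
        simpa using (smul_eq_zero.mp h2').resolve_left (by norm_num)
      have h5 : J (J x) = -x := by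
        have := congrFun (congrArg (DFunLike.coe) hJ) x
        simpa [Module.End.mul_apply] using this
      have : -x = 0 := by rw [← h5, hJx, map_zero]
      simpa using this
    have hsum := Submodule.finrank_sup_add_finrank_inf_eq
      (LinearMap.ker (J + K)) (LinearMap.ker (J - K))
    rw [hinf, h1, h2] at hsum
    have hle := Submodule.finrank_le (LinearMap.ker (J + K) ⊔ LinearMap.ker (J - K))
    rw [hdim] at hle
    simp at hsum
    omega
  · intro h
    -- make V a ℂ-vector space via J
    set φ : ℂ →ₐ[ℝ] Module.End ℝ V := Complex.lift ⟨J, hJ⟩ with hφ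
    letI : Module ℂ V := Module.compHom V (φ.toRingHom : ℂ →+* Module.End ℝ V)
    have hsmul : ∀ (c : ℂ) (v : V), c • v = φ c v := fun c v => rfl
    letI : IsScalarTower ℝ ℂ V := by
      constructor
      intro r c v
      rw [hsmul, hsmul]
      have h6 : φ (r • c) = r • φ c := map_smul φ r c
      rw [h6, LinearMap.smul_apply]
    have hIsmul : ∀ v : V, (Complex.I) • v = J v := by
      intro v
      rw [hsmul]
      have h7 : φ Complex.I = J := Complex.liftAux_apply_I J hJ
      rw [h7]
    haveI : FiniteDimensional ℂ V := FiniteDimensional.right ℝ ℂ V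
    have hrank : finrank ℂ V = n := by
      have hmn := Module.finrank_mul_finrank ℝ ℂ V
      rw [Complex.finrank_real_complex, hdim] at hmn
      omega
    set l : ℕ := n - m₁ - mneg with hl
    have hrankW : finrank ℂ ((Fin m₁ → ℂ) × ((Fin mneg → ℂ) × (Fin l → ℂ))) = n := by
      rw [Module.finrank_prod, Module.finrank_prod, Module.finrank_pi,
        Module.finrank_pi, Module.finrank_pi]
      simp only [Fintype.card_fin]
      omega
    obtain ⟨e'⟩ : Nonempty (V ≃ₗ[ℂ] ((Fin m₁ → ℂ) × ((Fin mneg → ℂ) × (Fin l → ℂ)))) :=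
      FiniteDimensional.nonempty_linearEquiv_of_finrank_eq (by rw [hrank, hrankW])
    set e : V ≃ₗ[ℝ] ((Fin m₁ → ℂ) × ((Fin mneg → ℂ) × (Fin l → ℂ))) :=
      e'.restrictScalars ℝ with he
    -- the complex structures on the model
    set a : ℂ := ⟨0, -(3/2)⟩ with ha
    set b : ℂ := ⟨1, -(1/2)⟩ with hb
    set J' : Module.End ℝ ((Fin m₁ → ℂ) × ((Fin mneg → ℂ) × (Fin l → ℂ))) :=
      (Taux m₁ Complex.I 0).prodMap ((Taux mneg Complex.I 0).prodMap (Taux l Complex.I 0))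
      with hJ'
    set K' : Module.End ℝ ((Fin m₁ → ℂ) × ((Fin mneg → ℂ) × (Fin l → ℂ))) :=
      (Taux m₁ (-Complex.I) 0).prodMap ((Taux mneg Complex.I 0).prodMap (Taux l a b))
      with hK'
    have hprodmul : ∀ (f₁ g₁ : Module.End ℝ (Fin m₁ → ℂ))
        (f₂ g₂ : Module.End ℝ (Fin mneg → ℂ)) (f₃ g₃ : Module.End ℝ (Fin l → ℂ)),
        (f₁.prodMap (f₂.prodMap f₃)) * (g₁.prodMap (g₂.prodMap g₃)) =
          (f₁ * g₁).prodMap ((f₂ * g₂).prodMap (f₃ * g₃)) := by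
      intro f₁ g₁ f₂ g₂ f₃ g₃
      apply LinearMap.ext
      rintro ⟨x, y, z⟩
      rfl
    have hconja : (starRingEnd ℂ) a = ⟨0, 3/2⟩ := by
      rw [ha]; exact Complex.ext (by simp) (by simp)
    have hconjb : (starRingEnd ℂ) b = ⟨1, 1/2⟩ := by
      rw [hb]; exact Complex.ext (by simp) (by simp)
    have habmul : a * a + b * (starRingEnd ℂ) b = -1 := by
      rw [hconjb, ha, hb]
      exact Complex.ext (by simp; try norm_num; try ring) (by simp; try norm_num; try ring)
    have habmul2 : a * b + b * (starRingEnd ℂ) a = 0 := by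
      rw [hconja, ha, hb]
      exact Complex.ext (by simp; try norm_num; try ring) (by simp; try norm_num; try ring)
    have hKK' : K' * K' = -1 := by
      rw [hK', hprodmul, Taux_mul, Taux_mul, Taux_mul, habmul, habmul2]
      have c1 : -Complex.I * -Complex.I + (0:ℂ) * (starRingEnd ℂ) 0 = -1 := by
        simp [Complex.I_mul_I]
      have c2 : -Complex.I * (0:ℂ) + (0:ℂ) * (starRingEnd ℂ) (-Complex.I) = 0 := by simp
      have c3 : Complex.I * Complex.I + (0:ℂ) * (starRingEnd ℂ) 0 = -1 := by
        simp [Complex.I_mul_I]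
      have c4 : Complex.I * (0:ℂ) + (0:ℂ) * (starRingEnd ℂ) Complex.I = 0 := by simp
      rw [c1, c2, c3, c4, Taux_neg_one, Taux_neg_one, Taux_neg_one]
      apply LinearMap.ext
      rintro ⟨x, y, z⟩
      rfl
    -- J' is multiplication by I on the model
    have hJ'smul : ∀ w : ((Fin m₁ → ℂ) × ((Fin mneg → ℂ) × (Fin l → ℂ))),
        J' w = Complex.I • w := by
      rintro ⟨x, y, z⟩
      rw [hJ']
      refine Prod.ext ?_ (Prod.ext ?_ ?_) <;> funext j <;>
        simp [LinearMap.prodMap_apply, smul_eq_mul]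
    -- e intertwines J and J'
    have hJe : ∀ v : V, e (J v) = J' (e v) := by
      intro v
      rw [hJ'smul]
      have h1 : e (J v) = e' (J v) := rfl
      have h2 : e v = e' v := rfl
      rw [h1, h2, ← hIsmul v, map_smul]
    have hJcomp : (J : Module.End ℝ V) =
        (e.symm : ((Fin m₁ → ℂ) × ((Fin mneg → ℂ) × (Fin l → ℂ))) →ₗ[ℝ] V) ∘ₗ J' ∘ₗ
          (e : V →ₗ[ℝ] ((Fin m₁ → ℂ) × ((Fin mneg → ℂ) × (Fin l → ℂ)))) := by
      apply LinearMap.ext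
      intro v
      simp [← hJe v]
    -- define K by conjugation
    refine ⟨(e.symm : ((Fin m₁ → ℂ) × ((Fin mneg → ℂ) × (Fin l → ℂ))) →ₗ[ℝ] V) ∘ₗ K' ∘ₗ
      (e : V →ₗ[ℝ] ((Fin m₁ → ℂ) × ((Fin mneg → ℂ) × (Fin l → ℂ)))), ?_, ?_, ?_⟩
    · apply LinearMap.ext
      intro v
      have h8 : K' (K' (e v)) = -(e v) := by
        have := congrFun (congrArg (DFunLike.coe) hKK') (e v)
        simpa [Module.End.mul_apply] using this
      simp [Module.End.mul_apply, h8]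
    · -- kernel of J + K
      rw [hJcomp, ← LinearMap.comp_add, ← LinearMap.add_comp]
      rw [LinearMap.ker_comp, LinearEquiv.ker, Submodule.comap_bot, LinearMap.ker_comp,
        Submodule.comap_equiv_eq_map_symm, LinearEquiv.finrank_map_eq e.symm]
      have hadd : J' + K' = (Taux m₁ (Complex.I + -Complex.I) (0 + 0)).prodMap
          (((Taux mneg (Complex.I + Complex.I) (0 + 0)).prodMap
            (Taux l (Complex.I + a) (0 + b)))) := by
        rw [hJ', hK', ← LinearMap.prodMap_add, ← LinearMap.prodMap_add,
          Taux_add, Taux_add, Taux_add]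
      rw [hadd, LinearMap.ker_prodMap, LinearMap.ker_prodMap]
      have k1 : LinearMap.ker (Taux m₁ (Complex.I + -Complex.I) ((0:ℂ) + 0)) = ⊤ := by
        rw [add_neg_cancel, add_zero, Taux_zero, LinearMap.ker_zero]
      have k2 : LinearMap.ker (Taux mneg (Complex.I + Complex.I) ((0:ℂ) + 0)) = ⊥ := by
        apply ker_Taux_eq_bot
        simp [Complex.normSq_apply]
      have k3 : LinearMap.ker (Taux l (Complex.I + a) ((0:ℂ) + b)) = ⊥ := by
        apply ker_Taux_eq_bot
        rw [ha, hb]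
        simp [Complex.normSq_apply]
        norm_num
      rw [k1, k2, k3, finrank_prod_aux, finrank_prod_aux]
      simp [finrank_top, finrank_bot, finrank_fin_fun_complex]
    · -- kernel of J - K
      rw [hJcomp, ← LinearMap.comp_sub, ← LinearMap.sub_comp]
      rw [LinearMap.ker_comp, LinearEquiv.ker, Submodule.comap_bot, LinearMap.ker_comp,
        Submodule.comap_equiv_eq_map_symm, LinearEquiv.finrank_map_eq e.symm]
      have hsub : J' - K' = (Taux m₁ (Complex.I - -Complex.I) (0 - 0)).prodMap
          (((Taux mneg (Complex.I - Complex.I) (0 - 0)).prodMap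
            (Taux l (Complex.I - a) (0 - b)))) := by
        rw [hJ', hK', prodMap_sub_aux, prodMap_sub_aux,
          Taux_sub, Taux_sub, Taux_sub]
      rw [hsub, LinearMap.ker_prodMap, LinearMap.ker_prodMap]
      have k1 : LinearMap.ker (Taux m₁ (Complex.I - -Complex.I) ((0:ℂ) - 0)) = ⊥ := by
        apply ker_Taux_eq_bot
        simp [Complex.normSq_apply]
      have k2 : LinearMap.ker (Taux mneg (Complex.I - Complex.I) ((0:ℂ) - 0)) = ⊤ := by
        rw [sub_self, sub_zero, Taux_zero, LinearMap.ker_zero]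
      have k3 : LinearMap.ker (Taux l (Complex.I - a) ((0:ℂ) - b)) = ⊥ := by
        apply ker_Taux_eq_bot
        rw [ha, hb]
        simp [Complex.normSq_apply]
        norm_num
      rw [k1, k2, k3, finrank_prod_aux, finrank_prod_aux]
      simp [finrank_top, finrank_bot, finrank_fin_fun_complex]
end

section
/- Let (V,g) be a 2n-dimensional real inner product space with orthogonal complex structures J and K satisfying dim ker(J-K) = 2s. Set W = V_K^{0,1} and V⁰ = V_J^{0,1} in V_ℂ = V ⊗ ℂ. Then V_ℂ decomposes as (W₁ ⊕ W₂) ⊕ (conj(W₁) ⊕ W₂'), where W₁ = V⁰ ∩ W = (ker(J-K) ⊗ ℂ) ∩ V_J^{0,1}, W₂ = (Im(J-K) ⊗ ℂ)^{0,1}_K, W₂' = (Im(J-K) ⊗ ℂ)^{0,1}_J, the subspace conj(W₁) ⊕ W₂' is maximal isotropic, W₁ ⊕ W₂' = V⁰, and g(conj(w₁), w₂) = 0 for all w₁ ∈ W₁, w₂ ∈ W₂. -/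
/-!
Write `A = J - K`. Since `J` and `K` are orthogonal with square `-1` they are skew, hence so is
`A`, and `V = ker A ⊕ im A` orthogonally. From `A J = -K A` and `A K = -J A` both summands are
invariant under `J` and `K`, so every `(0,1)`-space splits along `V_ℂ = (ker A)_ℂ ⊕ (im A)_ℂ`;
on `(ker A)_ℂ` the structures `J` and `K` agree, which identifies `W₁` with `V_J^{0,1} ∩ V_K^{0,1}`.
Conjugation exchanges the `∓i`-eigenspaces of a complex structure on an invariant subspace, so each
has half its dimension; together with `W₂ ∩ W₂' ⊆ (ker A)_ℂ ∩ (im A)_ℂ = 0` this gives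
`W₂ ⊕ W₂' = (im A)_ℂ` and `dim (conj W₁ ⊕ W₂') = n`. Isotropy holds because the eigenspaces of an
orthogonal complex structure are isotropic for the bilinear extension of `g`, and
`(ker A)_ℂ ⊥ (im A)_ℂ`.
-/

open TensorProduct Module
open scoped RealInnerProductSpace

section BaseChange
variable {K L V W : Type*} [Field K] [Field L] [Algebra K L]
  [AddCommGroup V] [Module K V] [AddCommGroup W] [Module K W]

theorem LinearMap.ker_baseChange (f : V →ₗ[K] W) :
    LinearMap.ker (f.baseChange L) = (LinearMap.ker f).baseChange L :=
  Module.Flat.ker_lTensor_eq L L f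

theorem Submodule.finrank_baseChange [FiniteDimensional K V] (p : Submodule K V) :
    finrank L (p.baseChange L) = finrank K p := by
  have hinj : Function.Injective (p.subtype.baseChange L) :=
    Module.Flat.lTensor_preserves_injective_linearMap _ p.injective_subtype
  rw [Submodule.baseChange, LinearMap.finrank_range_of_inj hinj, Module.finrank_baseChange]

theorem Submodule.baseChange_le_comap_baseChange {f : V →ₗ[K] W} {p : Submodule K V}
    {q : Submodule K W} (h : p ≤ q.comap f) :
    p.baseChange L ≤ (q.baseChange L).comap (f.baseChange L) := by
  rw [Submodule.baseChange_eq_span, Submodule.span_le]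
  rintro - ⟨v, hv, rfl⟩
  exact Submodule.tmul_mem_baseChange_of_mem _ (h hv)

theorem Submodule.baseChange_le_comap_baseChange_add_smul_id {f : V →ₗ[K] V}
    {p : Submodule K V} (h : p ≤ p.comap f) (c : L) :
    p.baseChange L ≤ (p.baseChange L).comap (f.baseChange L + c • LinearMap.id) := fun x hx ↦
  show f.baseChange L x + c • x ∈ p.baseChange L from
    add_mem (Submodule.baseChange_le_comap_baseChange h hx) (Submodule.smul_mem _ c hx)

theorem Submodule.isCompl_baseChange [FiniteDimensional K V] {p q : Submodule K V}
    (h : IsCompl p q) : IsCompl (p.baseChange L) (q.baseChange L) := by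
  have hsup : p.baseChange L ⊔ q.baseChange L = ⊤ := by
    rw [eq_top_iff, ← Submodule.baseChange_top, ← h.sup_eq_top, Submodule.baseChange_eq_span,
      Submodule.span_le]
    rintro - ⟨v, hv, rfl⟩
    obtain ⟨a, ha, b, hb, rfl⟩ := Submodule.mem_sup.mp hv
    rw [map_add]
    exact Submodule.add_mem_sup (Submodule.tmul_mem_baseChange_of_mem _ ha)
      (Submodule.tmul_mem_baseChange_of_mem _ hb)
  refine ⟨?_, codisjoint_iff.mpr hsup⟩
  rw [disjoint_iff, ← Submodule.finrank_eq_zero]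
  have hsum := Submodule.finrank_sup_add_finrank_inf_eq (p.baseChange L) (q.baseChange L)
  rw [hsup, finrank_top, Module.finrank_baseChange, Submodule.finrank_baseChange,
    Submodule.finrank_baseChange, ← Submodule.finrank_add_eq_of_isCompl h] at hsum
  omega

end BaseChange

theorem iSupIndep_fin_four_of_disjoint {α : Type*} [CompleteLattice α] [IsModularLattice α]
    {a b c d : α} (hac : Disjoint a c) (hbd : Disjoint b d) (h : Disjoint (a ⊔ c) (b ⊔ d)) :
    iSupIndep ![a, b, c, d] := by
  rw [iSupIndep_iff_supIndep_univ, Finset.supIndep_iff_disjoint_erase]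
  have h₀ : Finset.univ.erase (0 : Fin 4) = {1, 2, 3} := by decide
  have h₁ : Finset.univ.erase (1 : Fin 4) = {0, 2, 3} := by decide
  have h₂ : Finset.univ.erase (2 : Fin 4) = {0, 1, 3} := by decide
  have h₃ : Finset.univ.erase (3 : Fin 4) = {0, 1, 2} := by decide
  intro i _
  fin_cases i <;>
    simp only [Fin.zero_eta, Fin.mk_one, Fin.reduceFinMk, h₀, h₁, h₂, h₃, Finset.sup_insert,
      Finset.sup_singleton, Matrix.cons_val_zero, Matrix.cons_val_one, Matrix.cons_val]
  · exact (hac.disjoint_sup_right_of_disjoint_sup_left h).mono_right (le_of_eq (by ac_rfl))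
  · exact (hbd.disjoint_sup_right_of_disjoint_sup_left h.symm).mono_right (le_of_eq (by ac_rfl))
  · exact (hac.symm.disjoint_sup_right_of_disjoint_sup_left (sup_comm a c ▸ h)).mono_right
      (le_of_eq (by ac_rfl))
  · exact (hbd.symm.disjoint_sup_right_of_disjoint_sup_left (sup_comm b d ▸ h.symm)).mono_right
      (le_of_eq (by ac_rfl))

section Endomorphisms
variable {R M : Type*} [Ring R] [AddCommGroup M] [Module R M]

theorem LinearMap.ker_eq_inf_sup_inf_of_isCompl {p q : Submodule R M} (hpq : IsCompl p q)
    {f : M →ₗ[R] M} (hp : p ≤ p.comap f) (hq : q ≤ q.comap f) :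
    LinearMap.ker f = p ⊓ LinearMap.ker f ⊔ q ⊓ LinearMap.ker f := by
  refine le_antisymm (fun x hx ↦ ?_) (sup_le inf_le_right inf_le_right)
  obtain ⟨a, ha, b, hb, rfl⟩ := Submodule.mem_sup.mp (hpq.sup_eq_top ▸ Submodule.mem_top (x := x))
  have hfab : f a = -f b := eq_neg_of_add_eq_zero_left (by simpa using hx)
  have hfa : f a = 0 :=
    Submodule.disjoint_def.mp hpq.disjoint _ (hp ha) (hfab ▸ neg_mem (hq hb))
  have hfb : f b = 0 := by simpa [hfa] using hfab.symm
  exact Submodule.add_mem_sup ⟨ha, hfa⟩ ⟨hb, hfb⟩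

theorem LinearMap.ker_le_comap_of_mul_eq {A B C : Module.End R M} (h : A * B = C * A) :
    LinearMap.ker A ≤ (LinearMap.ker A).comap B := by
  intro v hv
  simp only [Submodule.mem_comap, LinearMap.mem_ker, ← Module.End.mul_apply, h] at hv ⊢
  simp [hv]

theorem LinearMap.range_le_comap_of_mul_eq {A B C : Module.End R M} (h : A * B = C * A) :
    LinearMap.range A ≤ (LinearMap.range A).comap C := by
  rintro - ⟨v, rfl⟩
  exact ⟨B v, by rw [← Module.End.mul_apply, h, Module.End.mul_apply]⟩

end Endomorphisms

section ComplexStructures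
variable {R : Type*} [Ring R] {J K : R}

theorem sub_mul_eq_neg_mul_sub (hJ : J * J = -1) (hK : K * K = -1) :
    (J - K) * J = -K * (J - K) := by
  simp only [sub_mul, mul_sub, hJ, hK, neg_mul]
  abel

theorem sub_mul_eq_neg_mul_sub' (hJ : J * J = -1) (hK : K * K = -1) :
    (J - K) * K = -J * (J - K) := by
  simp only [sub_mul, mul_sub, hJ, hK, neg_mul]
  abel

end ComplexStructures

section Bilinear
variable {R A M : Type*} [CommRing R] [CommRing A] [Algebra R A] [AddCommGroup M] [Module R M]

theorem LinearMap.BilinForm.eq_zero_of_mem_sup (B : LinearMap.BilinForm R M)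
    {P Q : Submodule R M} (hP : ∀ x ∈ P, ∀ y ∈ P, B x y = 0) (hQ : ∀ x ∈ Q, ∀ y ∈ Q, B x y = 0)
    (hPQ : ∀ x ∈ P, ∀ y ∈ Q, B x y = 0) (hQP : ∀ x ∈ Q, ∀ y ∈ P, B x y = 0) :
    ∀ x ∈ P ⊔ Q, ∀ y ∈ P ⊔ Q, B x y = 0 := by
  intro x hx y hy
  obtain ⟨x₁, hx₁, x₂, hx₂, rfl⟩ := Submodule.mem_sup.mp hx
  obtain ⟨y₁, hy₁, y₂, hy₂, rfl⟩ := Submodule.mem_sup.mp hy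
  simp [hP x₁ hx₁ y₁ hy₁, hQ x₂ hx₂ y₂ hy₂, hPQ x₁ hx₁ y₂ hy₂, hQP x₂ hx₂ y₁ hy₁]

theorem LinearMap.BilinForm.baseChange_eq_zero_of_mem (B : LinearMap.BilinForm R M)
    {p q : Submodule R M} (h : ∀ v ∈ p, ∀ w ∈ q, B v w = 0) {x y : A ⊗[R] M}
    (hx : x ∈ p.baseChange A) (hy : y ∈ q.baseChange A) : B.baseChange A x y = 0 := by
  have hleft : ∀ v ∈ p, q.baseChange A ≤ LinearMap.ker (B.baseChange A (1 ⊗ₜ v)) := by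
    intro v hv
    rw [Submodule.baseChange_eq_span, Submodule.span_le]
    rintro - ⟨w, hw, rfl⟩
    simp [h v hv w hw]
  have hright : p.baseChange A ≤ LinearMap.ker ((B.baseChange A).flip y) := by
    rw [Submodule.baseChange_eq_span, Submodule.span_le]
    rintro - ⟨v, hv, rfl⟩
    exact hleft v hv hy
  exact hright hx

theorem LinearMap.BilinForm.baseChange_apply_baseChange (B : LinearMap.BilinForm R M)
    {f : M →ₗ[R] M} (hf : ∀ v w, B (f v) (f w) = B v w) (x y : A ⊗[R] M) :
    B.baseChange A (f.baseChange A x) (f.baseChange A y) = B.baseChange A x y := by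
  suffices h : (B.baseChange A).compl₁₂ (f.baseChange A) (f.baseChange A) = B.baseChange A from
    LinearMap.congr_fun₂ h x y
  ext a v
  simp [hf]

end Bilinear

section ZeroOneSpace
variable {V : Type*} [AddCommGroup V] [Module ℝ V]

/-- `V_L^{0,1}`; note that `zeroOneSpace (-L)` is the `+i`-eigenspace `V_L^{1,0}`. -/
noncomputable def zeroOneSpace (L : Module.End ℝ V) : Submodule ℂ (ℂ ⊗[ℝ] V) :=
  LinearMap.ker (L.baseChange ℂ + Complex.I • LinearMap.id)

theorem mem_zeroOneSpace {L : Module.End ℝ V} {x : ℂ ⊗[ℝ] V} :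
    x ∈ zeroOneSpace L ↔ L.baseChange ℂ x = -(Complex.I • x) := by
  rw [zeroOneSpace, LinearMap.mem_ker, LinearMap.add_apply, LinearMap.smul_apply,
    LinearMap.id_apply, add_eq_zero_iff_eq_neg]

theorem disjoint_zeroOneSpace_neg (L : Module.End ℝ V) :
    Disjoint (zeroOneSpace L) (zeroOneSpace (-L)) := by
  refine Submodule.disjoint_def.mpr fun x h₁ h₂ ↦ ?_
  rw [mem_zeroOneSpace] at h₁ h₂
  rw [LinearMap.baseChange_neg, LinearMap.neg_apply, h₁, neg_inj] at h₂
  have h : (2 * Complex.I) • x = 0 := by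
    rw [mul_smul, two_smul]
    nth_rewrite 1 [← h₂]
    exact neg_add_cancel _
  exact (smul_eq_zero.mp h).resolve_left (by simp)

theorem baseChange_apply_baseChange_self {L : Module.End ℝ V} (hL : L * L = -1)
    (x : ℂ ⊗[ℝ] V) : L.baseChange ℂ (L.baseChange ℂ x) = -x := by
  rw [← Module.End.mul_apply, ← LinearMap.baseChange_mul, hL, LinearMap.baseChange_neg,
    LinearMap.baseChange_one, LinearMap.neg_apply, Module.End.one_apply]

theorem baseChange_eq_inf_sup_inf_zeroOneSpace {L : Module.End ℝ V} (hL : L * L = -1)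
    {p : Submodule ℝ V} (hp : p ≤ p.comap L) :
    p.baseChange ℂ = p.baseChange ℂ ⊓ zeroOneSpace L ⊔ p.baseChange ℂ ⊓ zeroOneSpace (-L) := by
  refine le_antisymm (fun x hx ↦ ?_) (sup_le inf_le_left inf_le_left)
  have hLx : L.baseChange ℂ x ∈ p.baseChange ℂ := Submodule.baseChange_le_comap_baseChange hp hx
  have h₁ : (2⁻¹ : ℂ) • (x + Complex.I • L.baseChange ℂ x) ∈ zeroOneSpace L := by
    rw [mem_zeroOneSpace, map_smul, map_add, map_smul, baseChange_apply_baseChange_self hL]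
    match_scalars
    · linear_combination (2⁻¹ : ℂ) * Complex.I_mul_I
    · ring
  have h₂ : (2⁻¹ : ℂ) • (x - Complex.I • L.baseChange ℂ x) ∈ zeroOneSpace (-L) := by
    rw [mem_zeroOneSpace, LinearMap.baseChange_neg, LinearMap.neg_apply, map_smul, map_sub,
      map_smul, baseChange_apply_baseChange_self hL]
    match_scalars
    · linear_combination (-2⁻¹ : ℂ) * Complex.I_mul_I
    · ring
  have hx₁ : (2⁻¹ : ℂ) • (x + Complex.I • L.baseChange ℂ x) ∈ p.baseChange ℂ :=
    Submodule.smul_mem _ _ (add_mem hx (Submodule.smul_mem _ _ hLx))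
  have hx₂ : (2⁻¹ : ℂ) • (x - Complex.I • L.baseChange ℂ x) ∈ p.baseChange ℂ :=
    Submodule.smul_mem _ _ (sub_mem hx (Submodule.smul_mem _ _ hLx))
  convert Submodule.add_mem_sup (Submodule.mem_inf.mpr ⟨hx₁, h₁⟩)
    (Submodule.mem_inf.mpr ⟨hx₂, h₂⟩) using 1
  module

theorem zeroOneSpace_eq_inf_sup_inf [FiniteDimensional ℝ V] {L : Module.End ℝ V}
    {p q : Submodule ℝ V} (hpq : IsCompl p q) (hp : p ≤ p.comap L) (hq : q ≤ q.comap L) :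
    zeroOneSpace L = p.baseChange ℂ ⊓ zeroOneSpace L ⊔ q.baseChange ℂ ⊓ zeroOneSpace L :=
  LinearMap.ker_eq_inf_sup_inf_of_isCompl (Submodule.isCompl_baseChange hpq)
    (Submodule.baseChange_le_comap_baseChange_add_smul_id hp _)
    (Submodule.baseChange_le_comap_baseChange_add_smul_id hq _)

theorem zeroOneSpace_inf_zeroOneSpace (L L' : Module.End ℝ V) :
    zeroOneSpace L ⊓ zeroOneSpace L' =
      (LinearMap.ker (L - L')).baseChange ℂ ⊓ zeroOneSpace L := by
  ext x
  simp only [Submodule.mem_inf, ← LinearMap.ker_baseChange, LinearMap.mem_ker,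
    LinearMap.baseChange_sub, LinearMap.sub_apply, sub_eq_zero]
  constructor
  · rintro ⟨hL, hL'⟩
    exact ⟨by rw [mem_zeroOneSpace.mp hL, mem_zeroOneSpace.mp hL'], hL⟩
  · rintro ⟨h, hL⟩
    exact ⟨hL, mem_zeroOneSpace.mpr (h ▸ mem_zeroOneSpace.mp hL)⟩

theorem baseChange_ker_sub_inf_zeroOneSpace_comm (J K : Module.End ℝ V) :
    (LinearMap.ker (J - K)).baseChange ℂ ⊓ zeroOneSpace K =
      (LinearMap.ker (J - K)).baseChange ℂ ⊓ zeroOneSpace J := by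
  rw [← zeroOneSpace_inf_zeroOneSpace, ← neg_sub K J, LinearMap.ker_neg,
    ← zeroOneSpace_inf_zeroOneSpace, inf_comm]

theorem disjoint_inf_zeroOneSpace_of_disjoint {J K : Module.End ℝ V}
    {Q : Submodule ℂ (ℂ ⊗[ℝ] V)} (h : Disjoint ((LinearMap.ker (J - K)).baseChange ℂ) Q) :
    Disjoint (Q ⊓ zeroOneSpace K) (Q ⊓ zeroOneSpace J) := by
  have hle : zeroOneSpace K ⊓ zeroOneSpace J ≤ (LinearMap.ker (J - K)).baseChange ℂ := by
    rw [inf_comm, zeroOneSpace_inf_zeroOneSpace]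
    exact inf_le_left
  refine disjoint_iff_inf_le.mpr (le_trans ?_ h.le_bot)
  exact le_inf ((inf_le_inf inf_le_right inf_le_right).trans hle) (inf_le_left.trans inf_le_left)

noncomputable def complexConj : (ℂ ⊗[ℝ] V) →ₗ[ℝ] (ℂ ⊗[ℝ] V) :=
  TensorProduct.map Complex.conjAe.toLinearMap LinearMap.id

@[simp]
theorem complexConj_tmul (c : ℂ) (v : V) :
    complexConj (c ⊗ₜ[ℝ] v) = (starRingEnd ℂ c) ⊗ₜ v := rfl

theorem complexConj_involutive : Function.Involutive (complexConj (V := V)) := by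
  intro x
  induction x using TensorProduct.induction_on with
  | zero => simp
  | tmul c v => simp
  | add a b ha hb => rw [map_add, map_add, ha, hb]

theorem complexConj_smul (c : ℂ) (x : ℂ ⊗[ℝ] V) :
    complexConj (c • x) = starRingEnd ℂ c • complexConj x := by
  induction x using TensorProduct.induction_on with
  | zero => simp
  | tmul a v => simp [smul_tmul']
  | add a b ha hb => rw [smul_add, map_add, ha, hb, map_add, smul_add]

theorem complexConj_baseChange {W : Type*} [AddCommGroup W] [Module ℝ W] (f : V →ₗ[ℝ] W)
    (x : ℂ ⊗[ℝ] V) : complexConj (f.baseChange ℂ x) = f.baseChange ℂ (complexConj x) := by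
  induction x using TensorProduct.induction_on with
  | zero => simp
  | tmul c v => simp
  | add a b ha hb => simp only [map_add, ha, hb]

theorem complexConj_mem_baseChange {p : Submodule ℝ V} {x : ℂ ⊗[ℝ] V} :
    complexConj x ∈ p.baseChange ℂ ↔ x ∈ p.baseChange ℂ := by
  suffices h : ∀ {y}, y ∈ p.baseChange ℂ → complexConj y ∈ p.baseChange ℂ from
    ⟨fun hx ↦ complexConj_involutive x ▸ h hx, h⟩
  rintro - ⟨y, rfl⟩
  exact ⟨complexConj y, (complexConj_baseChange _ _).symm⟩

theorem complexConj_mem_zeroOneSpace_of_mem {L : Module.End ℝ V} {x : ℂ ⊗[ℝ] V}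
    (hx : x ∈ zeroOneSpace L) : complexConj x ∈ zeroOneSpace (-L) := by
  rw [mem_zeroOneSpace] at hx ⊢
  rw [LinearMap.baseChange_neg, LinearMap.neg_apply, ← complexConj_baseChange, hx, map_neg,
    complexConj_smul, Complex.conj_I, neg_smul, neg_neg]

theorem complexConj_mem_zeroOneSpace {L : Module.End ℝ V} {x : ℂ ⊗[ℝ] V} :
    complexConj x ∈ zeroOneSpace L ↔ x ∈ zeroOneSpace (-L) := by
  refine ⟨fun h ↦ ?_, fun h ↦ neg_neg L ▸ complexConj_mem_zeroOneSpace_of_mem h⟩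
  simpa only [complexConj_involutive x] using complexConj_mem_zeroOneSpace_of_mem h

theorem complexConj_image_baseChange_inf_zeroOneSpace (p : Submodule ℝ V) (L : Module.End ℝ V) :
    complexConj '' ↑(p.baseChange ℂ ⊓ zeroOneSpace L) =
      (↑(p.baseChange ℂ ⊓ zeroOneSpace (-L)) : Set (ℂ ⊗[ℝ] V)) := by
  rw [complexConj_involutive.image_eq_preimage_symm]
  ext x
  simp only [Set.mem_preimage, SetLike.mem_coe, Submodule.mem_inf, complexConj_mem_baseChange,
    complexConj_mem_zeroOneSpace]

theorem finrank_eq_of_complexConj_image_eq {P Q : Submodule ℂ (ℂ ⊗[ℝ] V)}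
    (h : complexConj '' (P : Set (ℂ ⊗[ℝ] V)) = Q) : finrank ℂ P = finrank ℂ Q := by
  -- conjugation is only `ℝ`-linear, so compare real dimensions
  let e := (LinearEquiv.ofInvolutive complexConj complexConj_involutive).ofSubmodules
    (P.restrictScalars ℝ) (Q.restrictScalars ℝ) (SetLike.coe_injective h)
  have hP := Module.finrank_mul_finrank ℝ ℂ P
  have hQ := Module.finrank_mul_finrank ℝ ℂ Q
  have he : finrank ℝ P = finrank ℝ Q := e.finrank_eq
  rw [Complex.finrank_real_complex] at hP hQ
  omega

theorem two_mul_finrank_baseChange_inf_zeroOneSpace [FiniteDimensional ℝ V]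
    {L : Module.End ℝ V} (hL : L * L = -1) {p : Submodule ℝ V} (hp : p ≤ p.comap L) :
    2 * finrank ℂ ↥(p.baseChange ℂ ⊓ zeroOneSpace L) = finrank ℝ p := by
  have hconj := finrank_eq_of_complexConj_image_eq
    (complexConj_image_baseChange_inf_zeroOneSpace p L)
  have hsum := Submodule.finrank_sup_add_finrank_inf_eq
    (p.baseChange ℂ ⊓ zeroOneSpace L) (p.baseChange ℂ ⊓ zeroOneSpace (-L))
  have hdisj : (p.baseChange ℂ ⊓ zeroOneSpace L) ⊓ (p.baseChange ℂ ⊓ zeroOneSpace (-L)) = ⊥ :=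
    ((disjoint_zeroOneSpace_neg L).mono inf_le_right inf_le_right).eq_bot
  rw [← baseChange_eq_inf_sup_inf_zeroOneSpace hL hp, hdisj, finrank_bot,
    Submodule.finrank_baseChange] at hsum
  omega

theorem baseChange_inf_zeroOneSpace_sup_eq [FiniteDimensional ℝ V] {J K : Module.End ℝ V}
    (hJ : J * J = -1) (hK : K * K = -1) {p : Submodule ℝ V} (hpJ : p ≤ p.comap J)
    (hpK : p ≤ p.comap K) (h : Disjoint (p.baseChange ℂ ⊓ zeroOneSpace K)
      (p.baseChange ℂ ⊓ zeroOneSpace J)) :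
    p.baseChange ℂ ⊓ zeroOneSpace K ⊔ p.baseChange ℂ ⊓ zeroOneSpace J = p.baseChange ℂ := by
  refine Submodule.eq_of_le_of_finrank_eq (sup_le inf_le_left inf_le_left) ?_
  have hsum := Submodule.finrank_sup_add_finrank_inf_eq
    (p.baseChange ℂ ⊓ zeroOneSpace K) (p.baseChange ℂ ⊓ zeroOneSpace J)
  have hdimK := two_mul_finrank_baseChange_inf_zeroOneSpace hK hpK
  have hdimJ := two_mul_finrank_baseChange_inf_zeroOneSpace hJ hpJ
  rw [h.eq_bot, finrank_bot] at hsum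
  rw [Submodule.finrank_baseChange]
  omega

theorem span_complexConj_image_baseChange_inf_zeroOneSpace (p : Submodule ℝ V)
    (L : Module.End ℝ V) :
    Submodule.span ℂ (complexConj '' ↑(p.baseChange ℂ ⊓ zeroOneSpace L)) =
      p.baseChange ℂ ⊓ zeroOneSpace (-L) := by
  rw [complexConj_image_baseChange_inf_zeroOneSpace, Submodule.span_eq]

theorem two_mul_finrank_inf_zeroOneSpace_neg_sup [FiniteDimensional ℝ V] {L : Module.End ℝ V}
    (hL : L * L = -1) {p q : Submodule ℝ V} (hpq : IsCompl p q) (hp : p ≤ p.comap L)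
    (hq : q ≤ q.comap L) :
    2 * finrank ℂ ↥(p.baseChange ℂ ⊓ zeroOneSpace (-L) ⊔ q.baseChange ℂ ⊓ zeroOneSpace L) =
      finrank ℝ V := by
  have hdisj : Disjoint (p.baseChange ℂ ⊓ zeroOneSpace (-L)) (q.baseChange ℂ ⊓ zeroOneSpace L) :=
    (Submodule.isCompl_baseChange hpq).disjoint.mono inf_le_left inf_le_left
  have hsum := Submodule.finrank_sup_add_finrank_inf_eq
    (p.baseChange ℂ ⊓ zeroOneSpace (-L)) (q.baseChange ℂ ⊓ zeroOneSpace L)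
  have hdimp := two_mul_finrank_baseChange_inf_zeroOneSpace (L := -L) (by simpa using hL)
    (by simpa using hp)
  have hdimq := two_mul_finrank_baseChange_inf_zeroOneSpace hL hq
  have hdim := Submodule.finrank_add_eq_of_isCompl hpq
  rw [hdisj.eq_bot, finrank_bot] at hsum
  omega

theorem LinearMap.BilinForm.baseChange_eq_zero_of_mem_zeroOneSpace (B : LinearMap.BilinForm ℝ V)
    {L : Module.End ℝ V} (hL : ∀ v w, B (L v) (L w) = B v w) {x y : ℂ ⊗[ℝ] V}
    (hx : x ∈ zeroOneSpace L) (hy : y ∈ zeroOneSpace L) : B.baseChange ℂ x y = 0 := by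
  have h := B.baseChange_apply_baseChange hL x y
  rw [mem_zeroOneSpace.mp hx, mem_zeroOneSpace.mp hy] at h
  simp only [map_neg, map_smul, LinearMap.neg_apply, LinearMap.smul_apply, smul_eq_mul] at h
  linear_combination (-2⁻¹ : ℂ) * h + (2⁻¹ * B.baseChange ℂ x y) * Complex.I_mul_I

end ZeroOneSpace

section InnerProduct
variable {V : Type*} [NormedAddCommGroup V] [InnerProductSpace ℝ V]

theorem inner_map_left_eq_neg_inner_map_right {L : Module.End ℝ V} (hL : L * L = -1)
    (hLg : ∀ v w, ⟪L v, L w⟫ = ⟪v, w⟫) (v w : V) : ⟪L v, w⟫ = -⟪v, L w⟫ := by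
  have h := hLg v (L w)
  rw [← Module.End.mul_apply L L w, hL, LinearMap.neg_apply, Module.End.one_apply,
    inner_neg_right] at h
  linarith

theorem ker_eq_orthogonal_range_of_skew {A : Module.End ℝ V}
    (hA : ∀ v w, ⟪A v, w⟫ = -⟪v, A w⟫) : LinearMap.ker A = (LinearMap.range A)ᗮ := by
  ext v
  rw [LinearMap.mem_ker, Submodule.mem_orthogonal]
  constructor
  · rintro hv - ⟨w, rfl⟩
    rw [hA, hv, inner_zero_right, neg_zero]
  · intro hv
    have h := hv _ ⟨A v, rfl⟩
    rw [hA, neg_eq_zero] at h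
    exact inner_self_eq_zero.mp h

theorem ker_sub_eq_orthogonal_range_sub {J K : Module.End ℝ V} (hJ : J * J = -1)
    (hK : K * K = -1) (hJg : ∀ v w, ⟪J v, J w⟫ = ⟪v, w⟫) (hKg : ∀ v w, ⟪K v, K w⟫ = ⟪v, w⟫) :
    LinearMap.ker (J - K) = (LinearMap.range (J - K))ᗮ := by
  refine ker_eq_orthogonal_range_of_skew fun v w ↦ ?_
  simp only [LinearMap.sub_apply, inner_sub_left, inner_sub_right,
    inner_map_left_eq_neg_inner_map_right hJ hJg, inner_map_left_eq_neg_inner_map_right hK hKg]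
  ring

theorem baseChange_innerₗ_eq_zero_of_mem_sup {J : Module.End ℝ V}
    (hJg : ∀ v w, ⟪J v, J w⟫ = ⟪v, w⟫) {p q : Submodule ℝ V}
    (horth : ∀ v ∈ p, ∀ w ∈ q, ⟪v, w⟫ = 0) :
    ∀ x ∈ p.baseChange ℂ ⊓ zeroOneSpace (-J) ⊔ q.baseChange ℂ ⊓ zeroOneSpace J,
      ∀ y ∈ p.baseChange ℂ ⊓ zeroOneSpace (-J) ⊔ q.baseChange ℂ ⊓ zeroOneSpace J,
        LinearMap.BilinForm.baseChange ℂ (innerₗ V) x y = 0 := by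
  have horth' : ∀ v ∈ q, ∀ w ∈ p, ⟪v, w⟫ = 0 := fun v hv w hw ↦
    real_inner_comm v w ▸ horth w hw v hv
  refine LinearMap.BilinForm.eq_zero_of_mem_sup _ (fun x hx y hy ↦ ?_) (fun x hx y hy ↦ ?_)
    (fun x hx y hy ↦ ?_) (fun x hx y hy ↦ ?_)
  · exact LinearMap.BilinForm.baseChange_eq_zero_of_mem_zeroOneSpace _ (L := -J)
      (by simpa using hJg) hx.2 hy.2
  · exact LinearMap.BilinForm.baseChange_eq_zero_of_mem_zeroOneSpace _ hJg hx.2 hy.2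
  · exact LinearMap.BilinForm.baseChange_eq_zero_of_mem _ horth hx.1 hy.1
  · exact LinearMap.BilinForm.baseChange_eq_zero_of_mem _ horth' hx.1 hy.1

end InnerProduct

theorem maximal_isotropic_splitting_general
    (V : Type*) [NormedAddCommGroup V] [InnerProductSpace ℝ V] [FiniteDimensional ℝ V]
    (n : ℕ) (hdim : finrank ℝ V = 2 * n)
    (J K : Module.End ℝ V) (hJ : J * J = -1) (hK : K * K = -1)
    (hJg : ∀ v w : V, @inner ℝ V _ (J v) (J w) = @inner ℝ V _ v w)
    (hKg : ∀ v w : V, @inner ℝ V _ (K v) (K w) = @inner ℝ V _ v w) :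
    -- the `(0,1)`-eigenspace of (the base change of) an endomorphism `L`
    let E : Module.End ℝ V → Submodule ℂ (ℂ ⊗[ℝ] V) := fun L =>
      LinearMap.ker (LinearMap.baseChange ℂ L +
        Complex.I • (LinearMap.id : (ℂ ⊗[ℝ] V) →ₗ[ℂ] (ℂ ⊗[ℝ] V)))
    let conjMap : (ℂ ⊗[ℝ] V) →ₗ[ℝ] (ℂ ⊗[ℝ] V) :=
      TensorProduct.map Complex.conjAe.toLinearMap (LinearMap.id : V →ₗ[ℝ] V)
    let B : LinearMap.BilinForm ℂ (ℂ ⊗[ℝ] V) :=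
      LinearMap.BilinForm.baseChange ℂ (innerₗ V)
    let W₁ : Submodule ℂ (ℂ ⊗[ℝ] V) :=
      Submodule.baseChange ℂ (LinearMap.ker (J - K)) ⊓ E J
    let W₂ : Submodule ℂ (ℂ ⊗[ℝ] V) :=
      Submodule.baseChange ℂ (LinearMap.range (J - K)) ⊓ E K
    let W₂' : Submodule ℂ (ℂ ⊗[ℝ] V) :=
      Submodule.baseChange ℂ (LinearMap.range (J - K)) ⊓ E J
    let conjW₁ : Submodule ℂ (ℂ ⊗[ℝ] V) :=
      Submodule.span ℂ (conjMap '' (W₁ : Set (ℂ ⊗[ℝ] V)))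
    -- the four pieces form a direct sum decomposition of `V_ℂ`
    (iSupIndep ![W₁, W₂, conjW₁, W₂'] ∧ W₁ ⊔ W₂ ⊔ conjW₁ ⊔ W₂' = ⊤) ∧
    -- `W₁ ⊕ W₂ = W = V_K^{0,1}` and `W₁ = V⁰ ∩ W`
    (W₁ ⊔ W₂ = E K ∧ W₁ = E J ⊓ E K) ∧
    -- `W₁ ⊕ W₂' = V⁰ = V_J^{0,1}`
    (W₁ ⊔ W₂' = E J) ∧
    -- `conj W₁ ⊕ W₂'` is maximal isotropic
    (finrank ℂ ↥(conjW₁ ⊔ W₂') = n ∧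
      ∀ x ∈ conjW₁ ⊔ W₂', ∀ y ∈ conjW₁ ⊔ W₂', B x y = 0) ∧
    -- `g(conj w₁, w₂) = 0` for all `w₁ ∈ W₁`, `w₂ ∈ W₂`
    (∀ w₁ ∈ W₁, ∀ w₂ ∈ W₂, B (conjMap w₁) w₂ = 0) := by
  intro E conjMap B W₁ W₂ W₂' conjW₁
  set N := LinearMap.ker (J - K)
  set R := LinearMap.range (J - K)
  have hNR : N = Rᗮ := ker_sub_eq_orthogonal_range_sub hJ hK hJg hKg
  have hcompl : IsCompl N R := hNR ▸ R.isCompl_orthogonal.symm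
  have hcomplℂ : IsCompl (N.baseChange ℂ) (R.baseChange ℂ) := Submodule.isCompl_baseChange hcompl
  have horth : ∀ v ∈ N, ∀ w ∈ R, ⟪v, w⟫ = 0 := fun v hv w hw ↦
    Submodule.inner_left_of_mem_orthogonal hw (hNR ▸ hv)
  have hNJ : N ≤ N.comap J := LinearMap.ker_le_comap_of_mul_eq (sub_mul_eq_neg_mul_sub hJ hK)
  have hNK : N ≤ N.comap K := LinearMap.ker_le_comap_of_mul_eq (sub_mul_eq_neg_mul_sub' hJ hK)
  have hRJ : R ≤ R.comap J := by
    simpa using LinearMap.range_le_comap_of_mul_eq (sub_mul_eq_neg_mul_sub' hJ hK)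
  have hRK : R ≤ R.comap K := by
    simpa using LinearMap.range_le_comap_of_mul_eq (sub_mul_eq_neg_mul_sub hJ hK)
  have hconj : conjW₁ = N.baseChange ℂ ⊓ zeroOneSpace (-J) :=
    span_complexConj_image_baseChange_inf_zeroOneSpace N J
  have hNc : W₁ ⊔ conjW₁ = N.baseChange ℂ :=
    hconj ▸ (baseChange_eq_inf_sup_inf_zeroOneSpace hJ hNJ).symm
  have hRc : W₂ ⊔ W₂' = R.baseChange ℂ := baseChange_inf_zeroOneSpace_sup_eq hJ hK hRJ hRK
    (disjoint_inf_zeroOneSpace_of_disjoint hcomplℂ.disjoint)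
  refine ⟨⟨?_, ?_⟩, ⟨?_, (zeroOneSpace_inf_zeroOneSpace J K).symm⟩,
    (zeroOneSpace_eq_inf_sup_inf hcompl hNJ hRJ).symm, ⟨?_, ?_⟩, ?_⟩
  · exact iSupIndep_fin_four_of_disjoint
      (hconj ▸ (disjoint_zeroOneSpace_neg J).mono inf_le_right inf_le_right)
      (disjoint_inf_zeroOneSpace_of_disjoint hcomplℂ.disjoint)
      (hNc ▸ hRc ▸ hcomplℂ.disjoint)
  · rw [sup_assoc, sup_sup_sup_comm, hNc, hRc, hcomplℂ.sup_eq_top]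
  · show W₁ ⊔ W₂ = zeroOneSpace K
    rw [zeroOneSpace_eq_inf_sup_inf hcompl hNK hRK, baseChange_ker_sub_inf_zeroOneSpace_comm]
    rfl
  · have h : 2 * finrank ℂ ↥(conjW₁ ⊔ W₂') = 2 * n := by
      rw [hconj]
      exact (two_mul_finrank_inf_zeroOneSpace_neg_sup hJ hcompl hNJ hRJ).trans hdim
    omega
  · rw [hconj]
    exact baseChange_innerₗ_eq_zero_of_mem_sup hJg horth
  · exact fun w₁ hw₁ w₂ hw₂ ↦ LinearMap.BilinForm.baseChange_eq_zero_of_mem _ horth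
      (complexConj_mem_baseChange.mpr hw₁.1) hw₂.1

/-- For orthogonal complex structures `J, K` on a `2n`-dimensional real inner
product space with `dim ker (J-K) = 2s`, setting `W = V_K^{0,1}`, `V⁰ = V_J^{0,1}`,
`W₁ = (ker (J-K) ⊗ ℂ) ∩ V_J^{0,1}`, `W₂ = (Im (J-K) ⊗ ℂ)^{0,1}_K`,
`W₂' = (Im (J-K) ⊗ ℂ)^{0,1}_J`, the complexification decomposes as
`V_ℂ = (W₁ ⊕ W₂) ⊕ (conj W₁ ⊕ W₂')`, with `W₁ ⊕ W₂ = W`, `W₁ ⊕ W₂' = V⁰`,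
`conj W₁ ⊕ W₂'` maximal isotropic, and `g(conj w₁, w₂) = 0` for `w₁ ∈ W₁`, `w₂ ∈ W₂`. -/
theorem maximal_isotropic_splitting
    (V : Type*) [NormedAddCommGroup V] [InnerProductSpace ℝ V] [FiniteDimensional ℝ V]
    (n s : ℕ) (hdim : finrank ℝ V = 2 * n)
    (J K : Module.End ℝ V) (hJ : J * J = -1) (hK : K * K = -1)
    (hJg : ∀ v w : V, @inner ℝ V _ (J v) (J w) = @inner ℝ V _ v w)
    (hKg : ∀ v w : V, @inner ℝ V _ (K v) (K w) = @inner ℝ V _ v w)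
    (hs : finrank ℝ (LinearMap.ker (J - K)) = 2 * s) :
    -- the `(0,1)`-eigenspace of (the base change of) an endomorphism `L`
    let E : Module.End ℝ V → Submodule ℂ (ℂ ⊗[ℝ] V) := fun L =>
      LinearMap.ker (LinearMap.baseChange ℂ L +
        Complex.I • (LinearMap.id : (ℂ ⊗[ℝ] V) →ₗ[ℂ] (ℂ ⊗[ℝ] V)))
    let conjMap : (ℂ ⊗[ℝ] V) →ₗ[ℝ] (ℂ ⊗[ℝ] V) :=
      TensorProduct.map Complex.conjAe.toLinearMap (LinearMap.id : V →ₗ[ℝ] V)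
    let B : LinearMap.BilinForm ℂ (ℂ ⊗[ℝ] V) :=
      LinearMap.BilinForm.baseChange ℂ (innerₗ V)
    let W₁ : Submodule ℂ (ℂ ⊗[ℝ] V) :=
      Submodule.baseChange ℂ (LinearMap.ker (J - K)) ⊓ E J
    let W₂ : Submodule ℂ (ℂ ⊗[ℝ] V) :=
      Submodule.baseChange ℂ (LinearMap.range (J - K)) ⊓ E K
    let W₂' : Submodule ℂ (ℂ ⊗[ℝ] V) :=
      Submodule.baseChange ℂ (LinearMap.range (J - K)) ⊓ E J
    let conjW₁ : Submodule ℂ (ℂ ⊗[ℝ] V) :=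
      Submodule.span ℂ (conjMap '' (W₁ : Set (ℂ ⊗[ℝ] V)))
    -- the four pieces form a direct sum decomposition of `V_ℂ`
    (iSupIndep ![W₁, W₂, conjW₁, W₂'] ∧ W₁ ⊔ W₂ ⊔ conjW₁ ⊔ W₂' = ⊤) ∧
    -- `W₁ ⊕ W₂ = W = V_K^{0,1}` and `W₁ = V⁰ ∩ W`
    (W₁ ⊔ W₂ = E K ∧ W₁ = E J ⊓ E K) ∧
    -- `W₁ ⊕ W₂' = V⁰ = V_J^{0,1}`
    (W₁ ⊔ W₂' = E J) ∧
    -- `conj W₁ ⊕ W₂'` is maximal isotropic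
    (finrank ℂ ↥(conjW₁ ⊔ W₂') = n ∧
      ∀ x ∈ conjW₁ ⊔ W₂', ∀ y ∈ conjW₁ ⊔ W₂', B x y = 0) ∧
    -- `g(conj w₁, w₂) = 0` for all `w₁ ∈ W₁`, `w₂ ∈ W₂`
    (∀ w₁ ∈ W₁, ∀ w₂ ∈ W₂, B (conjMap w₁) w₂ = 0) :=
  maximal_isotropic_splitting_general V n hdim J K hJ hK hJg hKg
end

section
/- Let V be a 2n-dimensional real vector space with complex structures J and K and let m₁ = dim ker(J+K)/2. The tangent space at K to the manifold C^(m₁,*) = {K' : K'² = -1, dim ker(J+K') = 2m₁}, viewed inside {A ∈ End(V) : AK + KA = 0}, equals {A : AK + KA = 0 and A(ker(J+K)) ⊆ Im(J+K)}. In particular, if K(t) is a smooth curve of complex structures with K(0) = K and dim ker(J+K(t)) constant, then K'(0) maps ker(J+K) into Im(J+K). -/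
/-!
Let `A = f t₀` and let `W` be a complement of `ker A`. Since `A` is bounded below on `W`, so is
`f t` for `t` near `t₀`; the rank hypothesis then makes `W` a complement of `ker (f t)` as well,
so `f t v = f t w` for some `w ∈ W` with `‖w‖ ≲ ‖f t v‖ = ‖(f t - A) v‖ = O(t - t₀)`. Hence
`f t v - A w = (f t - A) w = O((t - t₀)²)`: the curve `t ↦ f t v`, which starts at `A v = 0`,
stays `o(t - t₀)`-close to `range A`, so its velocity `f' v` lies in `range A`.
-/

open Module Filter Topology Asymptotics LinearMap

section

variable {𝕜 : Type*} [NontriviallyNormedField 𝕜]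
  {E F : Type*} [NormedAddCommGroup E] [NormedSpace 𝕜 E] [NormedAddCommGroup F] [NormedSpace 𝕜 F]

theorem HasDerivAt.mem_of_eventually_exists_norm_sub_le [CompleteSpace 𝕜] [FiniteDimensional 𝕜 F]
    {S : Submodule 𝕜 F} {γ : 𝕜 → F} {γ' : F} {t₀ : 𝕜} {ε : 𝕜 → ℝ}
    (hγ : HasDerivAt γ γ' t₀) (hε : ε =o[𝓝 t₀] (· - t₀))
    (hnear : ∀ᶠ t in 𝓝 t₀, ∃ s ∈ S, ‖γ t - s‖ ≤ ε t) : γ' ∈ S := by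
  obtain ⟨Q, hQ⟩ := S.exists_isCompl
  let φ : F →L[𝕜] Q := (Q.projectionOnto S hQ.symm).toContinuousLinearMap
  have hφ_small : (fun t => φ (γ t)) =o[𝓝 t₀] (· - t₀) := by
    refine IsBigO.trans_isLittleO (isBigO_iff.mpr ⟨‖φ‖, ?_⟩) hε
    filter_upwards [hnear] with t ⟨s, hs, hts⟩
    have hφs : φ s = 0 := (Q.projectionOnto_apply_eq_zero_iff hQ.symm).mpr hs
    calc ‖φ (γ t)‖ = ‖φ (γ t - s)‖ := by rw [map_sub, hφs, sub_zero]
      _ ≤ ‖φ‖ * ‖γ t - s‖ := φ.le_opNorm _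
      _ ≤ ‖φ‖ * ‖ε t‖ := by gcongr; exact hts.trans (Real.le_norm_self _)
  have hφ₀ : φ (γ t₀) = 0 := hφ_small.isBigO.eq_zero_imp.self_of_nhds (sub_self t₀)
  have hderiv_zero : HasDerivAt (fun t => φ (γ t)) 0 t₀ := by
    rw [hasDerivAt_iff_isLittleO]
    simpa only [hφ₀, sub_zero, smul_zero] using hφ_small
  have hderiv : HasDerivAt (fun t => φ (γ t)) (φ γ') t₀ :=
    φ.hasFDerivAt.comp_hasDerivAt t₀ hγ
  rw [← Q.ker_projectionOnto hQ.symm]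
  exact hderiv.unique hderiv_zero

theorem ContinuousAt.exists_pos_eventually_mul_norm_le_norm_apply [CompleteSpace 𝕜]
    [FiniteDimensional 𝕜 E] {X : Type*} [TopologicalSpace X] {f : X → E →L[𝕜] F} {x₀ : X}
    (hf : ContinuousAt f x₀)
    {W : Submodule 𝕜 E} (hW : Disjoint W (ker (f x₀ : E →ₗ[𝕜] F))) :
    ∃ c > 0, ∀ᶠ x in 𝓝 x₀, ∀ w ∈ W, c * ‖w‖ ≤ ‖f x w‖ := by
  have hker : ker ((f x₀ : E →ₗ[𝕜] F).domRestrict W) = ⊥ := by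
    rw [ker_eq_bot']
    rintro ⟨w, hw⟩ hw₀
    exact Subtype.ext (Submodule.disjoint_def.mp hW w hw hw₀)
  obtain ⟨K, hK, hanti⟩ := LinearMap.exists_antilipschitzWith _ hker
  set c : ℝ := (2 * K)⁻¹
  have hc : 0 < c := by positivity
  refine ⟨c, hc, ?_⟩
  filter_upwards [hf.eventually (Metric.ball_mem_nhds _ hc)] with x hx w hw
  have hlower : 2 * c * ‖w‖ ≤ ‖f x₀ w‖ := by
    have hanti_w : ‖w‖ ≤ K * ‖f x₀ w‖ := hanti.le_mul_norm (map_zero _) ⟨w, hw⟩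
    have hK' : (0 : ℝ) < K := hK
    calc 2 * c * ‖w‖ = (K : ℝ)⁻¹ * ‖w‖ := by simp only [c]; field_simp
      _ ≤ ‖f x₀ w‖ := (inv_mul_le_iff₀ hK').mpr hanti_w
  have hpert : ‖(f x - f x₀) w‖ ≤ c * ‖w‖ :=
    ((f x - f x₀).le_opNorm w).trans (by gcongr; exact (dist_eq_norm (f x) (f x₀) ▸ hx).le)
  calc c * ‖w‖ = 2 * c * ‖w‖ - c * ‖w‖ := by ring
    _ ≤ ‖f x₀ w‖ - ‖(f x - f x₀) w‖ := by linarith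
    _ ≤ ‖f x w‖ := by
      rw [_root_.sub_apply]
      linarith [norm_sub_norm_le (f x₀ w) (f x w), norm_sub_rev (f x w) (f x₀ w)]

theorem isCompl_ker_of_mul_norm_le [FiniteDimensional 𝕜 E] {B : E →L[𝕜] F}
    {W : Submodule 𝕜 E} {c : ℝ} (hc : 0 < c) (hB : ∀ w ∈ W, c * ‖w‖ ≤ ‖B w‖)
    (hdim : finrank 𝕜 E ≤ finrank 𝕜 W + finrank 𝕜 (ker (B : E →ₗ[𝕜] F))) :
    IsCompl W (ker (B : E →ₗ[𝕜] F)) := by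
  refine (Submodule.isCompl_iff_disjoint _ _ hdim).mpr (Submodule.disjoint_def.mpr ?_)
  intro w hw hBw
  have : c * ‖w‖ ≤ 0 := by simpa [show B w = 0 from hBw] using hB w hw
  exact norm_le_zero_iff.mp (nonpos_of_mul_nonpos_right this hc)

theorem exists_mem_range_mul_norm_sub_le {A B : E →L[𝕜] F} {W : Submodule 𝕜 E} {c : ℝ}
    (hc : 0 ≤ c) (hB : ∀ w ∈ W, c * ‖w‖ ≤ ‖B w‖) (hW : IsCompl W (ker (B : E →ₗ[𝕜] F)))
    {v : E} (hv : A v = 0) :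
    ∃ s ∈ range (A : E →ₗ[𝕜] F), c * ‖B v - s‖ ≤ ‖B - A‖ ^ 2 * ‖v‖ := by
  set w := W.projection _ hW v
  have hw : w ∈ W := Submodule.projection_apply_mem hW v
  have hBw : B w = B v := by
    have := Submodule.sub_projection_mem hW v
    rw [LinearMap.mem_ker, ContinuousLinearMap.coe_coe, map_sub, sub_eq_zero] at this
    exact this.symm
  refine ⟨A w, mem_range_self _ w, ?_⟩
  calc c * ‖B v - A w‖ = c * ‖(B - A) w‖ := by rw [← hBw, _root_.sub_apply]
    _ ≤ c * (‖B - A‖ * ‖w‖) := by gcongr; exact (B - A).le_opNorm w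
    _ = ‖B - A‖ * (c * ‖w‖) := by ring
    _ ≤ ‖B - A‖ * ‖B w‖ := by gcongr; exact hB w hw
    _ = ‖B - A‖ * ‖(B - A) v‖ := by rw [hBw, _root_.sub_apply, hv, sub_zero]
    _ ≤ ‖B - A‖ * (‖B - A‖ * ‖v‖) := by gcongr; exact (B - A).le_opNorm v
    _ = ‖B - A‖ ^ 2 * ‖v‖ := by ring

theorem HasDerivAt.apply_mem_range_of_eventually_finrank_ker_le [CompleteSpace 𝕜]
    [FiniteDimensional 𝕜 E] [FiniteDimensional 𝕜 F] {f : 𝕜 → E →L[𝕜] F} {f' : E →L[𝕜] F}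
    {t₀ : 𝕜} (hf : HasDerivAt f f' t₀)
    (hker : ∀ᶠ t in 𝓝 t₀,
      finrank 𝕜 (ker (f t₀ : E →ₗ[𝕜] F)) ≤ finrank 𝕜 (ker (f t : E →ₗ[𝕜] F)))
    {v : E} (hv : v ∈ ker (f t₀ : E →ₗ[𝕜] F)) : f' v ∈ range (f t₀ : E →ₗ[𝕜] F) := by
  obtain ⟨W, hW⟩ := (ker (f t₀ : E →ₗ[𝕜] F)).exists_isCompl
  obtain ⟨c, hc, hbound⟩ :=
    hf.continuousAt.exists_pos_eventually_mul_norm_le_norm_apply hW.symm.disjoint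
  have hdim := Submodule.finrank_add_eq_of_isCompl hW
  have hcurve : HasDerivAt (fun t => f t v) (f' v) t₀ := by
    simpa using hf.clm_apply (hasDerivAt_const t₀ v)
  refine hcurve.mem_of_eventually_exists_norm_sub_le
    (ε := fun t => c⁻¹ * (‖f t - f t₀‖ ^ 2 * ‖v‖)) ?_ ?_
  · have hO : (fun t => ‖f t - f t₀‖) =O[𝓝 t₀] (· - t₀) := hf.isBigO_sub.norm_left
    have ho : (fun t => ‖f t - f t₀‖) =o[𝓝 t₀] (fun _ => (1 : 𝕜)) :=
      ((isLittleO_one_iff 𝕜).mpr (tendsto_sub_nhds_zero_iff.mpr hf.continuousAt)).norm_left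
    exact ((hO.mul_isLittleO ho).const_mul_left (c⁻¹ * ‖v‖)).congr (fun t => by ring)
      (fun t => mul_one _)
  · filter_upwards [hbound, hker] with t hbound_t hker_t
    have hcompl := isCompl_ker_of_mul_norm_le hc hbound_t (by omega)
    obtain ⟨s, hs, hst⟩ := exists_mem_range_mul_norm_sub_le hc.le hbound_t hcompl hv
    exact ⟨s, hs, (le_inv_mul_iff₀ hc).mpr hst⟩

end

theorem tangent_to_stratum_along_curve_general
    (V : Type*) [NormedAddCommGroup V] [NormedSpace ℝ V] [FiniteDimensional ℝ V]
    (m₁ : ℕ)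
    (J : V →L[ℝ] V)
    (K : ℝ → (V →L[ℝ] V))
    (hKdiff : DifferentiableAt ℝ K 0)
    (hconst : ∀ᶠ t in nhds (0 : ℝ),
      finrank ℝ (LinearMap.ker ((J + K t : V →L[ℝ] V) : V →ₗ[ℝ] V)) = 2 * m₁) :
    ∀ v ∈ LinearMap.ker ((J + K 0 : V →L[ℝ] V) : V →ₗ[ℝ] V),
      (deriv K 0) v ∈ LinearMap.range ((J + K 0 : V →L[ℝ] V) : V →ₗ[ℝ] V) := by
  intro v hv
  refine (hKdiff.hasDerivAt.const_add J).apply_mem_range_of_eventually_finrank_ker_le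
    (hconst.mono fun t ht => ?_) hv
  rw [ht, hconst.self_of_nhds]

/-- formalizable form: If `K(t)` is a smooth (differentiable) curve of
complex structures on a `2n`-dimensional real vector space with `K(0) = K` and
`dim ker (J + K(t)) = 2m₁` constant for `t` near `0`, then the derivative `K'(0)` maps
`ker (J + K)` into `Im (J + K)`; i.e. the tangent space at `K` to
`C^(m₁,*) = {K' : K'² = -1, dim ker (J+K') = 2m₁}` consists of anticommuting
endomorphisms `A` with `A (ker (J+K)) ⊆ Im (J+K)`. -/
theorem tangent_to_stratum_along_curve
    (V : Type*) [NormedAddCommGroup V] [NormedSpace ℝ V] [FiniteDimensional ℝ V]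
    (n m₁ : ℕ) (hdim : finrank ℝ V = 2 * n)
    (J : V →L[ℝ] V) (hJ : J * J = -1)
    (K : ℝ → (V →L[ℝ] V))
    (hK2 : ∀ t : ℝ, K t * K t = -1)
    (hKdiff : DifferentiableAt ℝ K 0)
    (hconst : ∀ᶠ t in nhds (0 : ℝ),
      finrank ℝ (LinearMap.ker ((J + K t : V →L[ℝ] V) : V →ₗ[ℝ] V)) = 2 * m₁) :
    ∀ v ∈ LinearMap.ker ((J + K 0 : V →L[ℝ] V) : V →ₗ[ℝ] V),
      (deriv K 0) v ∈ LinearMap.range ((J + K 0 : V →L[ℝ] V) : V →ₗ[ℝ] V) :=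
  tangent_to_stratum_along_curve_general V m₁ J K hKdiff hconst
end

section
/- Let (V, I, g) be a complex vector space with Hermitian metric g, and let H be a real 3-form on V. Then H is of type (1,2)+(2,1) with respect to I if and only if the endomorphism-valued condition I[g⁻¹H_v, I] = [g⁻¹H_{Iv}, I] holds for all v ∈ V. -/
open TensorProduct Module

/-- Generators of the `-σ`-eigenspace of `baseChange ℂ I` lie in the kernel of
`baseChange ℂ I + σ • id` whenever `σ * σ = -1`. -/
lemma aux_mem_statement18 {V : Type*} [AddCommGroup V] [Module ℝ V] (I : Module.End ℝ V)
    (hI2 : ∀ v, I (I v) = -v) (σ : ℂ) (hσ : σ * σ = -1) (a : V) :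
    ((1:ℂ) ⊗ₜ[ℝ] a + σ • ((1:ℂ) ⊗ₜ[ℝ] (I a))) ∈
      LinearMap.ker (LinearMap.baseChange ℂ I +
        σ • (LinearMap.id : (ℂ ⊗[ℝ] V) →ₗ[ℂ] (ℂ ⊗[ℝ] V))) := by
  rw [LinearMap.mem_ker]
  simp only [LinearMap.add_apply, LinearMap.smul_apply, LinearMap.id_apply, map_add,
    map_smul, LinearMap.baseChange_tmul, hI2, tmul_neg, smul_add, smul_smul, hσ,
    neg_one_smul, smul_neg]
  abel

/-- The kernel of `baseChange ℂ I + σ • id` is contained in the span of the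
canonical generators. -/
lemma aux_span_statement18 {V : Type*} [AddCommGroup V] [Module ℝ V] (I : Module.End ℝ V)
    (σ : ℂ) (hσ : σ * σ = -1) (t : ℂ ⊗[ℝ] V)
    (ht : t ∈ LinearMap.ker (LinearMap.baseChange ℂ I +
      σ • (LinearMap.id : (ℂ ⊗[ℝ] V) →ₗ[ℂ] (ℂ ⊗[ℝ] V)))) :
    t ∈ Submodule.span ℂ
      (Set.range fun a : V => (1:ℂ) ⊗ₜ[ℝ] a + σ • ((1:ℂ) ⊗ₜ[ℝ] (I a))) := by
  have key : ∀ s : ℂ ⊗[ℝ] V, s + σ • (LinearMap.baseChange ℂ I s) ∈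
      Submodule.span ℂ
        (Set.range fun a : V => (1:ℂ) ⊗ₜ[ℝ] a + σ • ((1:ℂ) ⊗ₜ[ℝ] (I a))) := by
    intro s
    induction s using TensorProduct.induction_on with
    | zero => simp
    | tmul c v =>
        have : (c ⊗ₜ[ℝ] v : ℂ ⊗[ℝ] V) + σ • LinearMap.baseChange ℂ I (c ⊗ₜ[ℝ] v)
            = c • ((1:ℂ) ⊗ₜ[ℝ] v + σ • ((1:ℂ) ⊗ₜ[ℝ] (I v))) := by
          simp only [LinearMap.baseChange_tmul, smul_add, smul_smul, mul_comm]
          rw [smul_tmul', smul_tmul', smul_tmul']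
          simp [mul_comm]
        rw [this]
        exact Submodule.smul_mem _ _ (Submodule.subset_span ⟨v, rfl⟩)
    | add s₁ s₂ h₁ h₂ =>
        have : (s₁ + s₂) + σ • LinearMap.baseChange ℂ I (s₁ + s₂)
            = (s₁ + σ • LinearMap.baseChange ℂ I s₁)
              + (s₂ + σ • LinearMap.baseChange ℂ I s₂) := by
          rw [map_add, smul_add]; abel
        rw [this]; exact Submodule.add_mem _ h₁ h₂
  rw [LinearMap.mem_ker, LinearMap.add_apply, LinearMap.smul_apply, LinearMap.id_apply,
    add_eq_zero_iff_eq_neg] at ht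
  have h2 := key t
  rw [ht, smul_neg, smul_smul, hσ, neg_one_smul, neg_neg] at h2
  have : t = (2⁻¹ : ℂ) • (t + t) := by
    rw [← two_smul ℂ t, smul_smul]; norm_num
  rw [this]
  exact Submodule.smul_mem _ _ h2

/-- If a trilinear form vanishes on a generating set it vanishes on the span. -/
lemma aux_vanish_statement18 {W : Type*} [AddCommGroup W] [Module ℂ W]
    (Hc : W →ₗ[ℂ] W →ₗ[ℂ] W →ₗ[ℂ] ℂ) (S : Set W)
    (hkey : ∀ a ∈ S, ∀ b ∈ S, ∀ c ∈ S, Hc a b c = 0) :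
    ∀ x ∈ Submodule.span ℂ S, ∀ y ∈ Submodule.span ℂ S, ∀ z ∈ Submodule.span ℂ S,
      Hc x y z = 0 := by
  have step1 : ∀ a ∈ S, ∀ b ∈ S, ∀ z ∈ Submodule.span ℂ S, Hc a b z = 0 := by
    intro a ha b hb z hz
    have hle : Submodule.span ℂ S ≤ LinearMap.ker (Hc a b) :=
      Submodule.span_le.2 fun c hc => LinearMap.mem_ker.2 (hkey a ha b hb c hc)
    exact LinearMap.mem_ker.1 (hle hz)
  have step2 : ∀ a ∈ S, ∀ y ∈ Submodule.span ℂ S, ∀ z ∈ Submodule.span ℂ S,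
      Hc a y z = 0 := by
    intro a ha y hy z hz
    have hle : Submodule.span ℂ S ≤ LinearMap.ker ((Hc a).flip z) :=
      Submodule.span_le.2 fun b hb => LinearMap.mem_ker.2 (step1 a ha b hb z hz)
    exact LinearMap.mem_ker.1 (hle hy)
  intro x hx y hy z hz
  have hle : Submodule.span ℂ S ≤ LinearMap.ker
      ({ toFun := fun w => Hc w y z
         map_add' := by intro p q; simp
         map_smul' := by intro c p; simp } : W →ₗ[ℂ] ℂ) :=
    Submodule.span_le.2 fun a ha => LinearMap.mem_ker.2 (step2 a ha y hy z hz)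
  exact LinearMap.mem_ker.1 (hle hx)

/-- Expansion of the complexified form on the canonical generators. -/
lemma aux_expand_statement18 {V : Type*} [AddCommGroup V] [Module ℝ V]
    (I : Module.End ℝ V) (H : AlternatingMap ℝ V ℝ (Fin 3))
    (Hc : (ℂ ⊗[ℝ] V) →ₗ[ℂ] (ℂ ⊗[ℝ] V) →ₗ[ℂ] (ℂ ⊗[ℝ] V) →ₗ[ℂ] ℂ)
    (hHc : ∀ v w u : V,
      Hc ((1 : ℂ) ⊗ₜ[ℝ] v) ((1 : ℂ) ⊗ₜ[ℝ] w) ((1 : ℂ) ⊗ₜ[ℝ] u) = (H ![v, w, u] : ℂ))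
    (σ : ℂ) (hσ : σ * σ = -1) (a b c : V) :
    Hc ((1:ℂ) ⊗ₜ[ℝ] a + σ • ((1:ℂ) ⊗ₜ[ℝ] (I a)))
       ((1:ℂ) ⊗ₜ[ℝ] b + σ • ((1:ℂ) ⊗ₜ[ℝ] (I b)))
       ((1:ℂ) ⊗ₜ[ℝ] c + σ • ((1:ℂ) ⊗ₜ[ℝ] (I c)))
      = ((H ![a,b,c] - H ![a, I b, I c] - H ![I a, b, I c] - H ![I a, I b, c] : ℝ) : ℂ)
        + σ * ((H ![I a, b, c] + H ![a, I b, c] + H ![a, b, I c]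
            - H ![I a, I b, I c] : ℝ) : ℂ) := by
  simp only [map_add, map_smul, LinearMap.add_apply, LinearMap.smul_apply, smul_eq_mul, hHc]
  push_cast
  linear_combination (H ![I a, I b, c] + H ![I a, b, I c] + H ![a, I b, I c]
    + σ * H ![I a, I b, I c] : ℂ) * hσ

/-- For a real alternating 3-form `H` on a real inner product space `(V, g)`
with orthogonal complex structure `I`, with `T v = g⁻¹H_v` (i.e. `g(T v w, u) = H(v,w,u)`)
and `H_ℂ` the `ℂ`-trilinear extension of `H` to `V ⊗ ℂ`, the form `H` is of type
`(1,2) + (2,1)` (its extension vanishes when all three arguments lie in the `+i`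
eigenspace of `I`, or all in the `-i` eigenspace) if and only if
`I [g⁻¹H_v, I] = [g⁻¹H_{Iv}, I]` for all `v ∈ V`. -/
theorem type_12_21_iff_commutator_identity
    (V : Type*) [NormedAddCommGroup V] [InnerProductSpace ℝ V] [FiniteDimensional ℝ V]
    (I : Module.End ℝ V) (hI : I * I = -1)
    (hIg : ∀ v w : V, @inner ℝ V _ (I v) (I w) = @inner ℝ V _ v w)
    (H : AlternatingMap ℝ V ℝ (Fin 3))
    (T : V → Module.End ℝ V)
    (hT : ∀ v w u : V, @inner ℝ V _ (T v w) u = H ![v, w, u])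
    (Hc : (ℂ ⊗[ℝ] V) →ₗ[ℂ] (ℂ ⊗[ℝ] V) →ₗ[ℂ] (ℂ ⊗[ℝ] V) →ₗ[ℂ] ℂ)
    (hHc : ∀ v w u : V,
      Hc ((1 : ℂ) ⊗ₜ[ℝ] v) ((1 : ℂ) ⊗ₜ[ℝ] w) ((1 : ℂ) ⊗ₜ[ℝ] u) = (H ![v, w, u] : ℂ)) :
    ((∀ x ∈ LinearMap.ker (LinearMap.baseChange ℂ I -
          Complex.I • (LinearMap.id : (ℂ ⊗[ℝ] V) →ₗ[ℂ] (ℂ ⊗[ℝ] V))),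
        ∀ y ∈ LinearMap.ker (LinearMap.baseChange ℂ I -
          Complex.I • (LinearMap.id : (ℂ ⊗[ℝ] V) →ₗ[ℂ] (ℂ ⊗[ℝ] V))),
        ∀ z ∈ LinearMap.ker (LinearMap.baseChange ℂ I -
          Complex.I • (LinearMap.id : (ℂ ⊗[ℝ] V) →ₗ[ℂ] (ℂ ⊗[ℝ] V))),
          Hc x y z = 0) ∧
      (∀ x ∈ LinearMap.ker (LinearMap.baseChange ℂ I +
          Complex.I • (LinearMap.id : (ℂ ⊗[ℝ] V) →ₗ[ℂ] (ℂ ⊗[ℝ] V))),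
        ∀ y ∈ LinearMap.ker (LinearMap.baseChange ℂ I +
          Complex.I • (LinearMap.id : (ℂ ⊗[ℝ] V) →ₗ[ℂ] (ℂ ⊗[ℝ] V))),
        ∀ z ∈ LinearMap.ker (LinearMap.baseChange ℂ I +
          Complex.I • (LinearMap.id : (ℂ ⊗[ℝ] V) →ₗ[ℂ] (ℂ ⊗[ℝ] V))),
          Hc x y z = 0)) ↔
    (∀ v : V, I * (T v * I - I * T v) = T (I v) * I - I * T (I v)) := by
  have hI2 : ∀ v : V, I (I v) = -v := by
    intro v
    have := LinearMap.congr_fun hI v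
    simpa [Module.End.mul_apply] using this
  have hskew : ∀ x u : V, @inner ℝ V _ (I x) u = - @inner ℝ V _ x (I u) := by
    intro x u
    have := hIg x (I u)
    rw [hI2, inner_neg_right] at this
    linarith
  have lhs_eq : ∀ v w u : V, @inner ℝ V _ ((I * (T v * I - I * T v)) w) u
      = H ![v,w,u] - H ![v, I w, I u] := by
    intro v w u
    simp only [Module.End.mul_apply, LinearMap.sub_apply, map_sub, hI2, sub_neg_eq_add,
      inner_add_left, inner_sub_left, hskew, hT]
    ring
  have rhs_eq : ∀ v w u : V, @inner ℝ V _ ((T (I v) * I - I * T (I v)) w) u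
      = H ![I v, I w, u] + H ![I v, w, I u] := by
    intro v w u
    simp only [Module.End.mul_apply, LinearMap.sub_apply, inner_sub_left, hskew, hT]
    ring
  have hB_iff : (∀ v : V, I * (T v * I - I * T v) = T (I v) * I - I * T (I v)) ↔
      (∀ v w u : V, H ![v,w,u] - H ![v, I w, I u] - H ![I v, w, I u]
        - H ![I v, I w, u] = 0) := by
    constructor
    · intro hB v w u
      have h1 := congrArg (fun x => @inner ℝ V _ x u) (LinearMap.congr_fun (hB v) w)
      rw [lhs_eq, rhs_eq] at h1
      linarith
    · intro hP v
      ext w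
      apply ext_inner_right ℝ
      intro u
      rw [lhs_eq, rhs_eq]
      linarith [hP v w u]
  -- rewrite the "minus" kernel in the "plus" normal form
  have hker_eq : (LinearMap.baseChange ℂ I -
        Complex.I • (LinearMap.id : (ℂ ⊗[ℝ] V) →ₗ[ℂ] (ℂ ⊗[ℝ] V)))
      = LinearMap.baseChange ℂ I + (-Complex.I) • LinearMap.id := by
    ext t
    simp [sub_eq_add_neg]
  have hσm : (-Complex.I) * (-Complex.I) = -1 := by
    simp [Complex.I_mul_I]
  have hσp : Complex.I * Complex.I = -1 := Complex.I_mul_I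
  -- negation in the first slot of H, etc.
  have hHneg : ∀ x y z : V, H ![-x, y, z] = -H ![x, y, z] := by
    intro x y z
    have h0 : (![-x, y, z] : Fin 3 → V) = Function.update ![x, y, z] 0 (-x) := by
      ext i
      fin_cases i <;> simp [Function.update]
    have h1 : (![x, y, z] : Fin 3 → V) = Function.update ![x, y, z] 0 x := by
      ext i
      fin_cases i <;> simp [Function.update]
    rw [h0, show H ![x,y,z] = H (Function.update ![x, y, z] 0 x) from by rw [← h1]]
    exact H.toMultilinearMap.map_update_neg ![x, y, z] 0 x
  rw [hB_iff]
  constructor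
  · rintro ⟨hA, _⟩ v w u
    have hmem := fun a => aux_mem_statement18 I hI2 (-Complex.I) hσm a
    have heq := hA _ (by rw [hker_eq]; exact hmem v) _ (by rw [hker_eq]; exact hmem w)
      _ (by rw [hker_eq]; exact hmem u)
    rw [aux_expand_statement18 I H Hc hHc (-Complex.I) hσm v w u] at heq
    have hre := congrArg Complex.re heq
    simpa using hre
  · intro hP
    have hP2 : ∀ v w u : V, H ![I v, w, u] + H ![v, I w, u] + H ![v, w, I u]
        - H ![I v, I w, I u] = 0 := by
      intro v w u
      have := hP (I v) w u
      rw [hI2] at this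
      rw [hHneg, hHneg] at this
      linarith
    have hkey : ∀ σ : ℂ, σ * σ = -1 → ∀ a b c : V,
        Hc ((1:ℂ) ⊗ₜ[ℝ] a + σ • ((1:ℂ) ⊗ₜ[ℝ] (I a)))
           ((1:ℂ) ⊗ₜ[ℝ] b + σ • ((1:ℂ) ⊗ₜ[ℝ] (I b)))
           ((1:ℂ) ⊗ₜ[ℝ] c + σ • ((1:ℂ) ⊗ₜ[ℝ] (I c))) = 0 := by
      intro σ hσ a b c
      rw [aux_expand_statement18 I H Hc hHc σ hσ a b c, hP a b c, hP2 a b c]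
      simp
    constructor
    · intro x hx y hy z hz
      rw [hker_eq] at hx hy hz
      exact aux_vanish_statement18 Hc _
        (by rintro _ ⟨a, rfl⟩ _ ⟨b, rfl⟩ _ ⟨c, rfl⟩; exact hkey (-Complex.I) hσm a b c)
        x (aux_span_statement18 I (-Complex.I) hσm x hx)
        y (aux_span_statement18 I (-Complex.I) hσm y hy)
        z (aux_span_statement18 I (-Complex.I) hσm z hz)
    · intro x hx y hy z hz
      exact aux_vanish_statement18 Hc _
        (by rintro _ ⟨a, rfl⟩ _ ⟨b, rfl⟩ _ ⟨c, rfl⟩; exact hkey Complex.I hσp a b c)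
        x (aux_span_statement18 I Complex.I hσp x hx)
        y (aux_span_statement18 I Complex.I hσp y hy)
        z (aux_span_statement18 I Complex.I hσp z hz)
end
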